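/- arXiv:1703.05695 — 7 statements merged into one kernel-verified Lean document; each statement's English description precedes it below -/
import Mathlib

section
/- Let H be a Hilbert space, and let (P_n) and (Q_n) be sequences of orthogonal projections on H converging in the strong operator topology to projections P and Q respectively, with P_n ≤ P and Q_n ≤ Q for all n. Then P_n ∨ Q_n converges to P ∨ Q in the strong operator topology. -/
open Filter Topology
open scoped InnerProductSpace

private lemma proj_norm_le' {H : Type*} [NormedAddCommGroup H] [InnerProductSpace ℂ H]
    [CompleteSpace H]
    (T : H →L[ℂ] H) (h1 : IsSelfAdjoint T) (h2 : IsIdempotentElem T) (ξ : H) : ‖T ξ‖ ≤ ‖ξ‖ := by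
  have hTT : ∀ x, T (T x) = T x := fun x => by rw [← ContinuousLinearMap.mul_apply, h2]
  rcases eq_or_lt_of_le (norm_nonneg (T ξ)) with h | h
  · rw [← h]; exact norm_nonneg ξ
  have e1 : ⟪T ξ, T ξ⟫_ℂ = ⟪ξ, T ξ⟫_ℂ := by
    rw [← ContinuousLinearMap.adjoint_inner_right T ξ (T ξ), h1.adjoint_eq, hTT]
  have key : ‖T ξ‖ * ‖T ξ‖ ≤ ‖ξ‖ * ‖T ξ‖ := by
    calc ‖T ξ‖ * ‖T ξ‖ = RCLike.re (⟪T ξ, T ξ⟫_ℂ) := by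
          rw [inner_self_eq_norm_mul_norm (𝕜 := ℂ)]
      _ = RCLike.re (⟪ξ, T ξ⟫_ℂ) := by rw [e1]
      _ ≤ ‖(⟪ξ, T ξ⟫_ℂ)‖ := RCLike.re_le_norm _
      _ ≤ ‖ξ‖ * ‖T ξ‖ := norm_inner_le_norm _ _
  exact le_of_mul_le_mul_right key h

private lemma idem_fix {H : Type*} [NormedAddCommGroup H] [InnerProductSpace ℂ H]
    (T : H →L[ℂ] H) (h2 : IsIdempotentElem T) {x : H} (hx : x ∈ LinearMap.range (T : H →ₗ[ℂ] H)) :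
    T x = x := by
  obtain ⟨y, rfl⟩ := hx
  simp only [ContinuousLinearMap.coe_coe]
  rw [← ContinuousLinearMap.mul_apply, h2]

/-- If sequences of orthogonal projections `Pₙ → P`, `Qₙ → Q` in the strong
operator topology with `Pₙ ≤ P`, `Qₙ ≤ Q`, then `Pₙ ∨ Qₙ → P ∨ Q` strongly.  A projection is a
self-adjoint idempotent; `≤` is range inclusion; the join is the (unique) projection whose
range is the closure of the span of the two ranges. -/
theorem stmt_0 {H : Type*} [NormedAddCommGroup H] [InnerProductSpace ℂ H] [CompleteSpace H]
    (P Q : H →L[ℂ] H) (Pn Qn J : ℕ → H →L[ℂ] H) (JPQ : H →L[ℂ] H)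
    (hP : IsSelfAdjoint P) (hP' : IsIdempotentElem P)
    (hQ : IsSelfAdjoint Q) (hQ' : IsIdempotentElem Q)
    (hPn : ∀ n, IsSelfAdjoint (Pn n) ∧ IsIdempotentElem (Pn n))
    (hQn : ∀ n, IsSelfAdjoint (Qn n) ∧ IsIdempotentElem (Qn n))
    (hPnP : ∀ n, LinearMap.range (Pn n : H →ₗ[ℂ] H) ≤ LinearMap.range (P : H →ₗ[ℂ] H))
    (hQnQ : ∀ n, LinearMap.range (Qn n : H →ₗ[ℂ] H) ≤ LinearMap.range (Q : H →ₗ[ℂ] H))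
    (hPconv : ∀ ξ : H, Tendsto (fun n => Pn n ξ) atTop (𝓝 (P ξ)))
    (hQconv : ∀ ξ : H, Tendsto (fun n => Qn n ξ) atTop (𝓝 (Q ξ)))
    (hJ : ∀ n, IsSelfAdjoint (J n) ∧ IsIdempotentElem (J n) ∧
      LinearMap.range (J n : H →ₗ[ℂ] H) =
        (LinearMap.range (Pn n : H →ₗ[ℂ] H) ⊔ LinearMap.range (Qn n : H →ₗ[ℂ] H)).topologicalClosure)
    (hJPQ : IsSelfAdjoint JPQ ∧ IsIdempotentElem JPQ ∧
      LinearMap.range (JPQ : H →ₗ[ℂ] H) = (LinearMap.range (P : H →ₗ[ℂ] H) ⊔ LinearMap.range (Q : H →ₗ[ℂ] H)).topologicalClosure) :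
    ∀ ξ : H, Tendsto (fun n => J n ξ) atTop (𝓝 (JPQ ξ)) := by
  intro ξ
  obtain ⟨hJs, hJi, hJr⟩ := hJPQ
  -- range (J n) ≤ range JPQ
  have hrange : ∀ n, LinearMap.range (J n : H →ₗ[ℂ] H) ≤ LinearMap.range (JPQ : H →ₗ[ℂ] H) := by
    intro n
    rw [(hJ n).2.2, hJr]
    exact Submodule.topologicalClosure_mono (sup_le_sup (hPnP n) (hQnQ n))
  -- JPQ * J n = J n
  have hcomp : ∀ n, JPQ * J n = J n := by
    intro n
    ext x
    exact idem_fix JPQ hJi (hrange n ⟨x, rfl⟩)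
  -- J n * JPQ = J n
  have hcomp' : ∀ n, J n * JPQ = J n := by
    intro n
    have := congrArg star (hcomp n)
    rwa [star_mul, (hJ n).1.star_eq, hJs.star_eq] at this
  have hJfix : ∀ n x, J n (JPQ x) = J n x := by
    intro n x
    conv_rhs => rw [← hcomp' n]
    rfl
  -- Pn n, Qn n ranges inside range (J n)
  have hPJ : ∀ n (p : H), p ∈ LinearMap.range (Pn n : H →ₗ[ℂ] H) → J n p = p := by
    intro n p hp
    refine idem_fix (J n) (hJ n).2.1 ?_
    rw [(hJ n).2.2]
    exact Submodule.le_topologicalClosure _ (le_sup_left (b := LinearMap.range (Qn n : H →ₗ[ℂ] H)) hp)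
  have hQJ : ∀ n (q : H), q ∈ LinearMap.range (Qn n : H →ₗ[ℂ] H) → J n q = q := by
    intro n q hq
    refine idem_fix (J n) (hJ n).2.1 ?_
    rw [(hJ n).2.2]
    exact Submodule.le_topologicalClosure _ (le_sup_right (a := LinearMap.range (Pn n : H →ₗ[ℂ] H)) hq)
  rw [Metric.tendsto_atTop]
  intro ε hε
  set v := JPQ ξ with hv
  have hvmem : v ∈ closure ((LinearMap.range (P : H →ₗ[ℂ] H) ⊔ LinearMap.range (Q : H →ₗ[ℂ] H) : Submodule ℂ H) : Set H) := by
    have : v ∈ LinearMap.range (JPQ : H →ₗ[ℂ] H) := ⟨ξ, rfl⟩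
    rw [hJr] at this
    exact this
  obtain ⟨w, hwmem, hwd⟩ := Metric.mem_closure_iff.mp hvmem (ε / 4) (by linarith)
  obtain ⟨p, hp, q, hq, hpq⟩ := Submodule.mem_sup.mp hwmem
  have hPp : P p = p := idem_fix P hP' hp
  have hQq : Q q = q := idem_fix Q hQ' hq
  have h1 := Metric.tendsto_atTop.mp (hPconv p) (ε / 8) (by linarith)
  have h2 := Metric.tendsto_atTop.mp (hQconv q) (ε / 8) (by linarith)
  obtain ⟨N1, hN1⟩ := h1
  obtain ⟨N2, hN2⟩ := h2
  refine ⟨max N1 N2, fun n hn => ?_⟩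
  have hn1 := hN1 n (le_trans (le_max_left _ _) hn)
  have hn2 := hN2 n (le_trans (le_max_right _ _) hn)
  rw [hPp] at hn1
  rw [hQq] at hn2
  rw [dist_eq_norm] at hn1 hn2 ⊢
  rw [dist_eq_norm] at hwd
  -- key pieces
  have hJn1 := (hJ n).1
  have hJn2 := (hJ n).2.1
  have hJnorm : ∀ x : H, ‖J n x‖ ≤ ‖x‖ := proj_norm_le' (J n) hJn1 hJn2
  have hfixsum : J n (Pn n p + Qn n q) = Pn n p + Qn n q := by
    rw [map_add, hPJ n (Pn n p) ⟨p, rfl⟩, hQJ n (Qn n q) ⟨q, rfl⟩]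
  have e0 : J n ξ = J n v := (hJfix n ξ).symm
  calc ‖J n ξ - JPQ ξ‖ = ‖J n v - v‖ := by rw [e0, ← hv]
    _ = ‖J n (v - w) + (J n w - (Pn n p + Qn n q)) + ((Pn n p + Qn n q) - w) + (w - v)‖ := by
        rw [map_sub]; abel_nf
    _ ≤ ‖J n (v - w)‖ + ‖J n w - (Pn n p + Qn n q)‖ + ‖(Pn n p + Qn n q) - w‖ + ‖w - v‖ := by
        refine le_trans (norm_add_le _ _) ?_
        gcongr
        exact le_trans (norm_add_le _ _) (by gcongr; exact norm_add_le _ _)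
    _ ≤ ‖v - w‖ + ‖w - (Pn n p + Qn n q)‖ + ‖(Pn n p + Qn n q) - w‖ + ‖w - v‖ := by
        gcongr
        · exact hJnorm _
        · conv_lhs => rw [← hfixsum]
          rw [← map_sub]; exact hJnorm _
    _ < ε := by
        have ew : ‖w - (Pn n p + Qn n q)‖ ≤ ‖Pn n p - p‖ + ‖Qn n q - q‖ := by
          have : w - (Pn n p + Qn n q) = -((Pn n p - p) + (Qn n q - q)) := by
            rw [← hpq]; abel
          rw [this, norm_neg]
          exact norm_add_le _ _
        have ew' : ‖(Pn n p + Qn n q) - w‖ ≤ ‖Pn n p - p‖ + ‖Qn n q - q‖ := by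
          rw [← norm_neg]
          have : -((Pn n p + Qn n q) - w) = w - (Pn n p + Qn n q) := neg_sub _ _
          rw [this]; exact ew
        have hwv : ‖w - v‖ < ε / 4 := by rw [← norm_neg]; simpa [neg_sub] using hwd
        linarith
end

section
/- Let M be a von Neumann algebra with a faithful normal tracial state τ. Let P, Q be projections in M, and let (P_n), (Q_n) be sequences of projections in M with P_n ≤ P and Q_n ≤ Q for all n, such that P_n → P and Q_n → Q in the norm ‖x‖₂ = τ(x*x)^{1/2}. Then P_n ∧ Q_n → P ∧ Q in ‖·‖₂. -/
open Filter Topology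

/-- A faithful normal tracial state on a von Neumann algebra `M ⊆ B(H)`.  Normality is
encoded as strong-operator continuity on norm-bounded sequences, which for states is
equivalent to normality. -/
structure FaithfulNormalTracialState (H : Type*) [NormedAddCommGroup H]
    [InnerProductSpace ℂ H] [CompleteSpace H] (M : VonNeumannAlgebra H) where
  toFun : (H →L[ℂ] H) →ₗ[ℂ] ℂ
  unital : toFun 1 = 1
  tracial : ∀ x ∈ M, ∀ y ∈ M, toFun (x * y) = toFun (y * x)
  pos : ∀ x ∈ M, 0 ≤ (toFun (star x * x)).re ∧ (toFun (star x * x)).im = 0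
  faithful : ∀ x ∈ M, toFun (star x * x) = 0 → x = 0
  normal : ∀ (f : ℕ → H →L[ℂ] H) (x : H →L[ℂ] H), (∀ n, f n ∈ M) → x ∈ M →
    (∃ C : ℝ, ∀ n, ‖f n‖ ≤ C) →
    (∀ ξ : H, Filter.Tendsto (fun n => f n ξ) Filter.atTop (nhds (x ξ))) →
    Filter.Tendsto (fun n => toFun (f n)) Filter.atTop (nhds (toFun x))

/-- The tracial 2-norm `‖x‖₂ = τ(x*x)^{1/2}`. -/
noncomputable def norm2 {H : Type*} [NormedAddCommGroup H] [InnerProductSpace ℂ H]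
    [CompleteSpace H] {M : VonNeumannAlgebra H} (τ : FaithfulNormalTracialState H M)
    (x : H →L[ℂ] H) : ℝ :=
  Real.sqrt ((τ.toFun (star x * x)).re)

namespace Stmt4Aux

open ContinuousLinearMap Polynomial

section Aux

variable {H : Type*} [NormedAddCommGroup H] [InnerProductSpace ℂ H] [CompleteSpace H]

local notation "⟪" x ", " y "⟫" => @inner ℂ _ _ x y

lemma proj_inner_self {p : H →L[ℂ] H} (hsa : IsSelfAdjoint p) (hidem : IsIdempotentElem p)
    (ξ : H) : ⟪p ξ, p ξ⟫ = ⟪p ξ, ξ⟫ := by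
  have h1 : ⟪p ξ, p ξ⟫ = ⟪p (p ξ), ξ⟫ := by
    rw [← ContinuousLinearMap.adjoint_inner_left]
    rw [← ContinuousLinearMap.star_eq_adjoint, hsa.star_eq]
  rw [h1, ← ContinuousLinearMap.mul_apply, hidem.eq]

lemma proj_norm_sq {p : H →L[ℂ] H} (hsa : IsSelfAdjoint p) (hidem : IsIdempotentElem p)
    (ξ : H) : ((‖p ξ‖ : ℂ) ^ 2) = ⟪p ξ, ξ⟫ := by
  rw [← proj_inner_self hsa hidem, inner_self_eq_norm_sq_to_K]
  norm_cast

lemma proj_apply_norm_le {p : H →L[ℂ] H} (hsa : IsSelfAdjoint p) (hidem : IsIdempotentElem p)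
    (ξ : H) : ‖p ξ‖ ≤ ‖ξ‖ := by
  rcases eq_or_lt_of_le (norm_nonneg (p ξ)) with h | h
  · rw [← h]; exact norm_nonneg ξ
  · have h2 := proj_norm_sq hsa hidem ξ
    have h3 : ‖p ξ‖ * ‖p ξ‖ ≤ ‖p ξ‖ * ‖ξ‖ := by
      calc ‖p ξ‖ * ‖p ξ‖ = ‖⟪p ξ, ξ⟫‖ := by
            rw [← h2]
            rw [← Complex.ofReal_pow, Complex.norm_real, Real.norm_eq_abs, abs_of_nonneg (by positivity)]
            ring
          _ ≤ ‖p ξ‖ * ‖ξ‖ := by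
            simpa using norm_inner_le_norm (𝕜 := ℂ) (p ξ) ξ
    exact le_of_mul_le_mul_left h3 h

lemma proj_apply_eq_of_norm_eq {p : H →L[ℂ] H} (hsa : IsSelfAdjoint p)
    (hidem : IsIdempotentElem p) {ξ : H} (h : ‖p ξ‖ = ‖ξ‖) : p ξ = ξ := by
  have key : ‖p ξ - ξ‖ ^ 2 = 0 := by
    have expand := @norm_sub_sq ℂ _ _ _ _ (p ξ) ξ
    have hre : RCLike.re ⟪p ξ, ξ⟫ = ‖p ξ‖ ^ 2 := by
      rw [← proj_norm_sq hsa hidem ξ]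
      norm_cast
    rw [expand, hre, h]
    ring
  have := pow_eq_zero_iff (n := 2) (by norm_num) |>.mp key
  rwa [norm_eq_zero, sub_eq_zero] at this

/-- membership in range of an idempotent. -/
lemma mem_range_iff_idem {p : H →L[ℂ] H} (hidem : IsIdempotentElem p) {x : H} :
    x ∈ LinearMap.range (p : H →ₗ[ℂ] H) ↔ p x = x := by
  constructor
  · rintro ⟨y, rfl⟩
    rw [ContinuousLinearMap.coe_coe, ← ContinuousLinearMap.mul_apply, hidem.eq]
  · intro h; exact ⟨x, h⟩

lemma comp_eq_of_range_le {p s : H →L[ℂ] H}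
    (hidemp : IsIdempotentElem p) (hidems : IsIdempotentElem s)
    (h : LinearMap.range (p : H →ₗ[ℂ] H) ≤ LinearMap.range (s : H →ₗ[ℂ] H)) : s * p = p := by
  ext x
  rw [ContinuousLinearMap.mul_apply]
  exact (mem_range_iff_idem hidems).mp (h ⟨x, rfl⟩)

lemma comp_eq_of_range_le' {p s : H →L[ℂ] H}
    (hsap : IsSelfAdjoint p) (hsas : IsSelfAdjoint s)
    (hidemp : IsIdempotentElem p) (hidems : IsIdempotentElem s)
    (h : LinearMap.range (p : H →ₗ[ℂ] H) ≤ LinearMap.range (s : H →ₗ[ℂ] H)) : p * s = p := by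
  have h1 : s * p = p := comp_eq_of_range_le hidemp hidems h
  calc p * s = star (s * p) := by rw [star_mul, hsap.star_eq, hsas.star_eq]
    _ = p := by rw [h1, hsap.star_eq]

lemma proj_eq_of_range_eq {p q : H →L[ℂ] H}
    (hsap : IsSelfAdjoint p) (hsaq : IsSelfAdjoint q)
    (hidemp : IsIdempotentElem p) (hidemq : IsIdempotentElem q)
    (h : LinearMap.range (p : H →ₗ[ℂ] H) = LinearMap.range (q : H →ₗ[ℂ] H)) : p = q := by
  have h1 : q * p = p := comp_eq_of_range_le hidemp hidemq h.le
  have h2 : p * q = q := comp_eq_of_range_le hidemq hidemp h.ge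
  calc p = q * p := h1.symm
    _ = star (p * q) := by rw [star_mul, hsap.star_eq, hsaq.star_eq]
    _ = q := by rw [h2, hsaq.star_eq]


lemma fix_of_comp {e q : H →L[ℂ] H}
    (hsae : IsSelfAdjoint e) (hidee : IsIdempotentElem e)
    (hsaq : IsSelfAdjoint q) (hideq : IsIdempotentElem q)
    (x : H) (h : e (q (e x)) = x) : e x = x ∧ q x = x := by
  have ch : ‖x‖ ≤ ‖e x‖ := by
    calc ‖x‖ = ‖e (q (e x))‖ := by rw [h]
      _ ≤ ‖q (e x)‖ := proj_apply_norm_le hsae hidee _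
      _ ≤ ‖e x‖ := proj_apply_norm_le hsaq hideq _
  have he : e x = x :=
    proj_apply_eq_of_norm_eq hsae hidee (le_antisymm (proj_apply_norm_le hsae hidee x) ch)
  refine ⟨he, ?_⟩
  rw [he] at h
  have ch2 : ‖x‖ ≤ ‖q x‖ := by
    calc ‖x‖ = ‖e (q x)‖ := by rw [h]
      _ ≤ ‖q x‖ := proj_apply_norm_le hsae hidee _
  exact proj_apply_eq_of_norm_eq hsaq hideq (le_antisymm (proj_apply_norm_le hsaq hideq x) ch2)

lemma csa {e q : H →L[ℂ] H} (hsae : IsSelfAdjoint e) (hsaq : IsSelfAdjoint q) :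
    IsSelfAdjoint (e * q * e) := by
  rw [IsSelfAdjoint, star_mul, star_mul, hsae.star_eq, hsaq.star_eq, mul_assoc]

lemma capply {e q : H →L[ℂ] H} (x : H) : (e * q * e) x = e (q (e x)) := rfl

lemma c_contract {e q : H →L[ℂ] H}
    (hsae : IsSelfAdjoint e) (hidee : IsIdempotentElem e)
    (hsaq : IsSelfAdjoint q) (hideq : IsIdempotentElem q)
    (x : H) : ‖(e * q * e) x‖ ≤ ‖x‖ := by
  rw [capply]
  calc ‖e (q (e x))‖ ≤ ‖q (e x)‖ := proj_apply_norm_le hsae hidee _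
    _ ≤ ‖e x‖ := proj_apply_norm_le hsaq hideq _
    _ ≤ ‖x‖ := proj_apply_norm_le hsae hidee _

lemma cpow_contract {e q : H →L[ℂ] H}
    (hsae : IsSelfAdjoint e) (hidee : IsIdempotentElem e)
    (hsaq : IsSelfAdjoint q) (hideq : IsIdempotentElem q)
    (m : ℕ) (x : H) : ‖((e * q * e) ^ m) x‖ ≤ ‖x‖ := by
  induction m with
  | zero => simp
  | succ k ih =>
    rw [pow_succ', ContinuousLinearMap.mul_apply]
    exact (c_contract hsae hidee hsaq hideq _).trans ih

lemma cinner_move {e q : H →L[ℂ] H}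
    (hsae : IsSelfAdjoint e) (hsaq : IsSelfAdjoint q) (k l : ℕ) (ξ : H) :
    ⟪((e*q*e)^k) ξ, ((e*q*e)^l) ξ⟫ = ⟪((e*q*e)^(l+k)) ξ, ξ⟫ := by
  have hsc : IsSelfAdjoint ((e*q*e) ^ l) := (csa hsae hsaq).pow l
  calc ⟪((e*q*e)^k) ξ, ((e*q*e)^l) ξ⟫
      = ⟪(ContinuousLinearMap.adjoint ((e*q*e)^l)) (((e*q*e)^k) ξ), ξ⟫ :=
        (ContinuousLinearMap.adjoint_inner_left _ _ _).symm
    _ = ⟪((e*q*e)^l) (((e*q*e)^k) ξ), ξ⟫ := by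
        rw [← ContinuousLinearMap.star_eq_adjoint, hsc.star_eq]
    _ = ⟪((e*q*e)^(l+k)) ξ, ξ⟫ := by rw [pow_add, ContinuousLinearMap.mul_apply]

lemma cinner_even {e q : H →L[ℂ] H}
    (hsae : IsSelfAdjoint e) (hsaq : IsSelfAdjoint q) (j : ℕ) (ξ : H) :
    (⟪((e*q*e)^(2*j)) ξ, ξ⟫ : ℂ).re = ‖((e*q*e)^j) ξ‖ ^ 2 := by
  have h := cinner_move hsae hsaq j j ξ
  rw [show j + j = 2*j by ring] at h
  rw [← h, ← inner_self_eq_norm_sq (𝕜 := ℂ)]; rfl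

lemma cinner_odd {e q : H →L[ℂ] H}
    (hsae : IsSelfAdjoint e) (hsaq : IsSelfAdjoint q) (hideq : IsIdempotentElem q) (j : ℕ) (ξ : H) :
    (⟪((e*q*e)^(2*j+1)) ξ, ξ⟫ : ℂ).re = ‖q (e (((e*q*e)^j) ξ))‖ ^ 2 := by
  have h1 := cinner_move hsae hsaq (j+1) j ξ
  rw [show j + (j+1) = 2*j+1 by ring] at h1
  have h2 : ((e*q*e)^(j+1)) ξ = e (q (e (((e*q*e)^j) ξ))) := by
    rw [pow_succ', ContinuousLinearMap.mul_apply]; rfl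
  have h3 : ⟪((e*q*e)^(2*j+1)) ξ, ξ⟫
      = ⟪q (e (((e*q*e)^j) ξ)), e (((e*q*e)^j) ξ)⟫ := by
    rw [← h1, h2]
    calc ⟪e (q (e (((e*q*e)^j) ξ))), ((e*q*e)^j) ξ⟫
        = ⟪(ContinuousLinearMap.adjoint e) (q (e (((e*q*e)^j) ξ))), ((e*q*e)^j) ξ⟫ := by
          rw [← ContinuousLinearMap.star_eq_adjoint, hsae.star_eq]
      _ = ⟪q (e (((e*q*e)^j) ξ)), e (((e*q*e)^j) ξ)⟫ :=
          ContinuousLinearMap.adjoint_inner_left _ _ _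
  rw [h3, ← proj_inner_self hsaq hideq, ← inner_self_eq_norm_sq (𝕜 := ℂ)]; rfl


/-- The sequence `m ↦ re⟪c^m ξ, ξ⟫` is antitone. -/
lemma crt_antitone {e q : H →L[ℂ] H}
    (hsae : IsSelfAdjoint e) (hidee : IsIdempotentElem e)
    (hsaq : IsSelfAdjoint q) (hideq : IsIdempotentElem q) (ξ : H) :
    Antitone (fun m => (⟪((e*q*e)^m) ξ, ξ⟫ : ℂ).re) := by
  apply antitone_nat_of_succ_le
  intro m
  rcases Nat.even_or_odd m with ⟨j, hj⟩ | ⟨j, hj⟩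
  · subst hj
    rw [show j + j = 2 * j by ring]
    rw [cinner_even hsae hsaq, cinner_odd hsae hsaq hideq]
    have h1 : ‖q (e (((e*q*e)^j) ξ))‖ ≤ ‖((e*q*e)^j) ξ‖ :=
      (proj_apply_norm_le hsaq hideq _).trans (proj_apply_norm_le hsae hidee _)
    exact pow_le_pow_left₀ (norm_nonneg _) h1 2
  · subst hj
    rw [show 2*j+1+1 = 2*(j+1) by ring]
    rw [cinner_even hsae hsaq, cinner_odd hsae hsaq hideq]
    have h2 : ((e*q*e)^(j+1)) ξ = e (q (e (((e*q*e)^j) ξ))) := by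
      rw [pow_succ', ContinuousLinearMap.mul_apply]; rfl
    rw [h2]
    have h1 : ‖e (q (e (((e*q*e)^j) ξ)))‖ ≤ ‖q (e (((e*q*e)^j) ξ))‖ :=
      proj_apply_norm_le hsae hidee _
    exact pow_le_pow_left₀ (norm_nonneg _) h1 2

lemma crt_nonneg {e q : H →L[ℂ] H}
    (hsae : IsSelfAdjoint e) (hsaq : IsSelfAdjoint q) (hideq : IsIdempotentElem q)
    (m : ℕ) (ξ : H) : 0 ≤ (⟪((e*q*e)^m) ξ, ξ⟫ : ℂ).re := by
  rcases Nat.even_or_odd m with ⟨j, hj⟩ | ⟨j, hj⟩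
  · subst hj; rw [show j + j = 2 * j by ring, cinner_even hsae hsaq]; positivity
  · subst hj; rw [cinner_odd hsae hsaq hideq]; positivity

/-- The powers `c^m ξ` form a Cauchy sequence. -/
lemma cpow_cauchy {e q : H →L[ℂ] H}
    (hsae : IsSelfAdjoint e) (hidee : IsIdempotentElem e)
    (hsaq : IsSelfAdjoint q) (hideq : IsIdempotentElem q) (ξ : H) :
    CauchySeq (fun m => ((e*q*e)^m) ξ) := by
  set c := e*q*e with hc
  set rt : ℕ → ℝ := fun m => (⟪(c^m) ξ, ξ⟫ : ℂ).re with hrt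
  have hanti : Antitone rt := crt_antitone hsae hidee hsaq hideq ξ
  have hnonneg : ∀ m, 0 ≤ rt m := fun m => crt_nonneg hsae hsaq hideq m ξ
  -- rt converges
  have hconv : ∃ L, Tendsto rt atTop (𝓝 L) :=
    ⟨_, tendsto_atTop_ciInf hanti ⟨0, fun x ⟨m, hm⟩ => hm ▸ hnonneg m⟩⟩
  obtain ⟨L, hL⟩ := hconv
  have hg : CauchySeq (fun m => rt (2*m)) :=
    (hL.comp (tendsto_atTop_atTop_of_monotone (fun a b h => by omega)
      (fun b => ⟨b, by omega⟩))).cauchySeq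
  rw [Metric.cauchySeq_iff] at hg ⊢
  intro ε hε
  obtain ⟨N, hN⟩ := hg (ε^2) (by positivity)
  refine ⟨N, fun m hm n hn => ?_⟩
  -- wlog n ≤ m
  have key : ∀ a b, N ≤ a → N ≤ b → b ≤ a → dist ((c^a) ξ) ((c^b) ξ) < ε := by
    intro a b ha hb hba
    have hexp : dist ((c^a) ξ) ((c^b) ξ)^2 = rt (2*a) - 2 * rt (a+b) + rt (2*b) := by
      rw [dist_eq_norm]
      have := @norm_sub_sq ℂ _ _ _ _ ((c^a) ξ) ((c^b) ξ)
      rw [this]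
      have h1 : ‖(c^a) ξ‖^2 = rt (2*a) := (cinner_even hsae hsaq a ξ).symm
      have h2 : ‖(c^b) ξ‖^2 = rt (2*b) := (cinner_even hsae hsaq b ξ).symm
      have h3 : RCLike.re ⟪(c^a) ξ, (c^b) ξ⟫ = rt (a+b) := by
        rw [cinner_move hsae hsaq a b ξ, show b + a = a + b by ring]; rfl
      rw [h1, h2, h3]
    have hle : dist ((c^a) ξ) ((c^b) ξ)^2 ≤ rt (2*b) - rt (2*a) := by
      rw [hexp]
      have h1 : rt (2*a) ≤ rt (a+b) := hanti (by omega)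
      linarith
    have hlt : rt (2*b) - rt (2*a) < ε^2 := by
      have := hN b hb a ha
      rw [Real.dist_eq] at this
      have h2 : rt (2*a) ≤ rt (2*b) := hanti (by omega)
      rw [abs_of_nonneg (by linarith)] at this
      linarith
    nlinarith [dist_nonneg (x := (c^a) ξ) (y := (c^b) ξ), hε]
  rcases le_total n m with h | h
  · exact key m n hm hn h
  · rw [dist_comm]; exact key n m hn hm h


/-- Existence of the meet of two projections, as a strong operator limit of `(eqe)^m`. -/
lemma meet_exists {e q : H →L[ℂ] H}
    (hsae : IsSelfAdjoint e) (hidee : IsIdempotentElem e)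
    (hsaq : IsSelfAdjoint q) (hideq : IsIdempotentElem q) :
    ∃ r : H →L[ℂ] H, IsSelfAdjoint r ∧ IsIdempotentElem r ∧
      LinearMap.range (r : H →ₗ[ℂ] H) = LinearMap.range (e : H →ₗ[ℂ] H) ⊓ LinearMap.range (q : H →ₗ[ℂ] H) ∧
      (∀ ξ, Tendsto (fun m => ((e*q*e)^m) ξ) atTop (𝓝 (r ξ))) ∧
      (∀ z : H →L[ℂ] H, z * (e*q*e) = (e*q*e) * z → z * r = r * z) := by
  set c := e*q*e with hc
  have hcsa : IsSelfAdjoint c := csa hsae hsaq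
  have hconv : ∀ ξ : H, ∃ y, Tendsto (fun m => (c^m) ξ) atTop (𝓝 y) := fun ξ =>
    cauchySeq_tendsto_of_complete (cpow_cauchy hsae hidee hsaq hideq ξ)
  choose F hF using hconv
  have Fadd : ∀ x y, F (x + y) = F x + F y := by
    intro x y
    refine tendsto_nhds_unique (hF (x+y)) ?_
    have : (fun m => (c^m) (x+y)) = fun m => (c^m) x + (c^m) y := by
      ext m; exact map_add _ _ _
    rw [this]
    exact (hF x).add (hF y)
  have Fsmul : ∀ (a : ℂ) x, F (a • x) = a • F x := by
    intro a x
    refine tendsto_nhds_unique (hF (a • x)) ?_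
    have : (fun m => (c^m) (a • x)) = fun m => a • (c^m) x := by
      ext m; exact map_smul _ _ _
    rw [this]
    exact (hF x).const_smul a
  have Fbound : ∀ x, ‖F x‖ ≤ 1 * ‖x‖ := by
    intro x
    rw [one_mul]
    exact le_of_tendsto' (hF x).norm (fun m => cpow_contract hsae hidee hsaq hideq m x)
  set rlin : H →ₗ[ℂ] H := { toFun := F, map_add' := Fadd, map_smul' := Fsmul } with hrlin
  set r : H →L[ℂ] H := LinearMap.mkContinuous rlin 1 Fbound with hr
  have hrapp : ∀ ξ, r ξ = F ξ := fun _ => rfl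
  have hrF : ∀ ξ, Tendsto (fun m => (c^m) ξ) atTop (𝓝 (r ξ)) := fun ξ => (hrapp ξ) ▸ hF ξ
  -- r is selfadjoint
  have hrsa : IsSelfAdjoint r := by
    rw [ContinuousLinearMap.isSelfAdjoint_iff_isSymmetric]
    intro x y
    have h1 : Tendsto (fun m => ⟪(c^m) x, y⟫) atTop (𝓝 ⟪r x, y⟫) :=
      (hrF x).inner tendsto_const_nhds
    have h2 : Tendsto (fun m => ⟪x, (c^m) y⟫) atTop (𝓝 ⟪x, r y⟫) :=
      tendsto_const_nhds.inner (hrF y)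
    have h3 : (fun m => ⟪(c^m) x, y⟫) = fun m => ⟪x, (c^m) y⟫ := by
      ext m
      have hsc : IsSelfAdjoint (c ^ m) := hcsa.pow m
      calc ⟪(c^m) x, y⟫ = ⟪(ContinuousLinearMap.adjoint (c^m)) x, y⟫ := by
            rw [← ContinuousLinearMap.star_eq_adjoint, hsc.star_eq]
        _ = ⟪x, (c^m) y⟫ := ContinuousLinearMap.adjoint_inner_left _ _ _
    rw [h3] at h1
    exact tendsto_nhds_unique h1 h2
  -- c * r = r
  have hcr : c * r = r := by
    ext ξ
    rw [ContinuousLinearMap.mul_apply]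
    have h1 : Tendsto (fun m => c ((c^m) ξ)) atTop (𝓝 (c (r ξ))) :=
      (c.continuous.tendsto _).comp (hrF ξ)
    have h2 : (fun m => c ((c^m) ξ)) = fun m => (c^(m+1)) ξ := by
      ext m; rw [pow_succ']; rfl
    rw [h2] at h1
    have h3 : Tendsto (fun m => (c^(m+1)) ξ) atTop (𝓝 (r ξ)) :=
      (hrF ξ).comp (tendsto_add_atTop_nat 1)
    exact tendsto_nhds_unique h1 h3
  have hrc : r * c = r := by
    have := congrArg star hcr
    rwa [star_mul, hcsa.star_eq, hrsa.star_eq] at this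
  -- r c^m = r
  have hrcm : ∀ m, r * c^m = r := by
    intro m
    induction m with
    | zero => simp
    | succ k ih => rw [pow_succ, ← mul_assoc, ih, hrc]
  -- fixed points
  have hfix : ∀ x : H, c x = x → r x = x := by
    intro x hx
    have hcm : ∀ m, (c^m) x = x := by
      intro m
      induction m with
      | zero => simp
      | succ k ih => rw [pow_succ, ContinuousLinearMap.mul_apply, hx]; exact ih
    have h1 : Tendsto (fun m => (c^m) x) atTop (𝓝 x) := by
      simp only [hcm]; exact tendsto_const_nhds
    exact tendsto_nhds_unique (hrF x) h1
  -- e (r ξ) = r ξ and q (r ξ) = r ξ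
  have herq : ∀ ξ, e (r ξ) = r ξ ∧ q (r ξ) = r ξ := by
    intro ξ
    have h1 : c (r ξ) = r ξ := by rw [← ContinuousLinearMap.mul_apply, hcr]
    exact fix_of_comp hsae hidee hsaq hideq _ h1
  -- r is idempotent
  have hridem : IsIdempotentElem r := by
    rw [IsIdempotentElem]
    ext ξ
    rw [ContinuousLinearMap.mul_apply]
    have h1 : Tendsto (fun m => r ((c^m) ξ)) atTop (𝓝 (r (r ξ))) :=
      (r.continuous.tendsto _).comp (hrF ξ)
    have h2 : (fun m => r ((c^m) ξ)) = fun _ => r ξ := by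
      ext m
      rw [← ContinuousLinearMap.mul_apply, hrcm m]
    rw [h2] at h1
    exact tendsto_nhds_unique h1 tendsto_const_nhds
  refine ⟨r, hrsa, hridem, ?_, hrF, ?_⟩
  · -- range
    apply le_antisymm
    · rintro x ⟨y, rfl⟩
      have h1 := herq y
      constructor
      · exact ⟨r y, h1.1⟩
      · exact ⟨r y, h1.2⟩
    · rintro x ⟨⟨y, hy⟩, ⟨w, hw⟩⟩
      have hex : e x = x := by
        rw [← hy, ContinuousLinearMap.coe_coe, ← ContinuousLinearMap.mul_apply, hidee.eq]
      have hqx : q x = x := by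
        rw [← hw, ContinuousLinearMap.coe_coe, ← ContinuousLinearMap.mul_apply, hideq.eq]
      have hcx : c x = x := by
        rw [hc]
        show e (q (e x)) = x
        rw [hex, hqx, hex]
      exact ⟨x, hfix x hcx⟩
  · -- commutation
    intro z hz
    ext ξ
    rw [ContinuousLinearMap.mul_apply, ContinuousLinearMap.mul_apply]
    have hzc : Commute z c := hz
    have h1 : Tendsto (fun m => z ((c^m) ξ)) atTop (𝓝 (z (r ξ))) :=
      (z.continuous.tendsto _).comp (hrF ξ)
    have h2 : (fun m => z ((c^m) ξ)) = fun m => (c^m) (z ξ) := by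
      ext m
      rw [← ContinuousLinearMap.mul_apply, (hzc.pow_right m).eq, ContinuousLinearMap.mul_apply]
    rw [h2] at h1
    exact tendsto_nhds_unique h1 (hrF (z ξ))


lemma mem_vna_of_commutes {M : VonNeumannAlgebra H} {x : H →L[ℂ] H}
    (h : ∀ z ∈ Set.centralizer (M : Set (H →L[ℂ] H)), z * x = x * z) : x ∈ M := by
  have hM := M.centralizer_centralizer
  have : x ∈ Set.centralizer (Set.centralizer (M : Set (H →L[ℂ] H))) :=
    Set.mem_centralizer_iff.mpr h
  rwa [hM] at this

lemma cfc_mem_vna {M : VonNeumannAlgebra H} {a : H →L[ℂ] H} (ha : a ∈ M)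
    (hsa : IsSelfAdjoint a) (f : ℝ → ℝ) (hf : Continuous f) : cfc f a ∈ M := by
  apply mem_vna_of_commutes
  intro z hz
  have hzx : Commute z a := (hz a ha).symm
  -- polynomials in `a` commute with `z`
  have hpoly : ∀ p : ℝ[X], Commute z (aeval a p) := by
    intro p
    have hsub : Algebra.adjoin ℝ ({a} : Set (H →L[ℂ] H)) ≤ Subalgebra.centralizer ℝ {z} := by
      apply Algebra.adjoin_le
      rintro x rfl
      rw [SetLike.mem_coe, Subalgebra.mem_centralizer_iff]
      rintro g rfl
      exact hzx.eq
    have := hsub (Polynomial.aeval_mem_adjoin_singleton ℝ a (p := p))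
    rw [Subalgebra.mem_centralizer_iff] at this
    exact this z rfl
  -- the commutant of `z` is closed
  have hclosed : IsClosed {w : H →L[ℂ] H | z * w = w * z} :=
    isClosed_eq (continuous_mul_left z) (continuous_mul_right z)
  -- `cfc f a` is in the closure of polynomials in `a`
  have hmem : cfc f a ∈ closure {w : H →L[ℂ] H | ∃ p : ℝ[X], aeval a p = w} := by
    rw [Metric.mem_closure_iff]
    intro ε hε
    have hcomp : CompactSpace (spectrum ℝ a) := inferInstance
    set s := spectrum ℝ a with hs
    set F : C(s, ℝ) := ContinuousMap.restrict s ⟨f, hf⟩ with hF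
    have hFmem : F ∈ closure ((polynomialFunctions s : Set C(s, ℝ))) := by
      have h1 : F ∈ (polynomialFunctions s).topologicalClosure := by
        rw [polynomialFunctions.topologicalClosure s]; trivial
      exact h1
    obtain ⟨g, hgmem, hgdist⟩ := Metric.mem_closure_iff.mp hFmem ε hε
    obtain ⟨p, hp⟩ : ∃ p : ℝ[X], p.toContinuousMapOn s = g := by
      simpa [polynomialFunctions] using hgmem
    refine ⟨aeval a p, ⟨p, rfl⟩, ?_⟩
    have hcalc : cfc f a - aeval a p = cfc (fun t => f t - p.eval t) a := by
      rw [cfc_sub f (fun t => p.eval t) a hf.continuousOn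
        (Polynomial.continuous p).continuousOn]
      rw [cfc_polynomial p a hsa]
    rw [dist_eq_norm, hcalc]
    have hbound : ∀ t ∈ s, ‖f t - p.eval t‖ ≤ dist g F := by
      intro t ht
      subst hp
      have := ContinuousMap.dist_apply_le_dist (f := p.toContinuousMapOn s) (g := F) ⟨t, ht⟩
      simpa [Real.dist_eq, Polynomial.toContinuousMapOn_apply, hF, abs_sub_comm] using this
    calc ‖cfc (fun t => f t - p.eval t) a‖ ≤ dist g F := norm_cfc_le dist_nonneg hbound
      _ < ε := by rwa [dist_comm]
  have hsub2 : {w : H →L[ℂ] H | ∃ p : ℝ[X], aeval a p = w} ⊆ {w | z * w = w * z} := by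
    rintro w ⟨p, rfl⟩
    exact (hpoly p).eq
  exact (hclosed.closure_subset_iff.mpr hsub2) hmem

lemma sqrt_mem_vna {M : VonNeumannAlgebra H} {a : H →L[ℂ] H} (ha : a ∈ M) (hpa : 0 ≤ a) :
    ∃ x : H →L[ℂ] H, x ∈ M ∧ star x * x = a := by
  have hsa : IsSelfAdjoint a := IsSelfAdjoint.of_nonneg hpa
  refine ⟨cfc Real.sqrt a, cfc_mem_vna ha hsa Real.sqrt Real.continuous_sqrt, ?_⟩
  have hx : IsSelfAdjoint (cfc Real.sqrt a) := cfc_predicate Real.sqrt a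
  rw [hx.star_eq, ← cfc_mul Real.sqrt Real.sqrt a
    Real.continuous_sqrt.continuousOn Real.continuous_sqrt.continuousOn]
  have : (spectrum ℝ a).EqOn (fun t => Real.sqrt t * Real.sqrt t) id := by
    intro t ht
    exact Real.mul_self_sqrt (spectrum_nonneg_of_nonneg hpa ht)
  rw [cfc_congr this, cfc_id ℝ a]


variable {M : VonNeumannAlgebra H}

lemma geom_aux {A : Type*} [Ring A] {c e : A} (hce : c * e = c) :
    ∀ m : ℕ, (∑ k ∈ Finset.range (m+1), c^k) * (e - c) = e - c^(m+1) := by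
  intro m
  induction m with
  | zero => simp [pow_one]
  | succ n ih =>
    have hcpe : c^(n+1) * e = c^(n+1) := by rw [pow_succ, mul_assoc, hce]
    rw [Finset.sum_range_succ, add_mul, ih, mul_sub, hcpe, ← pow_succ]
    abel

lemma tr_pos (τ : FaithfulNormalTracialState H M) {a : H →L[ℂ] H}
    (ha : a ∈ M) (hpa : 0 ≤ a) : 0 ≤ (τ.toFun a).re := by
  obtain ⟨x, hxM, hxa⟩ := sqrt_mem_vna ha hpa
  have := (τ.pos x hxM).1
  rwa [hxa] at this

lemma tr_mono (τ : FaithfulNormalTracialState H M) {a b : H →L[ℂ] H}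
    (ha : a ∈ M) (hb : b ∈ M) (hab : a ≤ b) : (τ.toFun a).re ≤ (τ.toFun b).re := by
  have h1 : 0 ≤ (τ.toFun (b - a)).re := tr_pos τ (sub_mem hb ha) (sub_nonneg.mpr hab)
  rw [map_sub, Complex.sub_re] at h1
  linarith

/-- The key trace inequality. -/
lemma key_ineq (τ : FaithfulNormalTracialState H M) {e q s : H →L[ℂ] H}
    (heM : e ∈ M) (hqM : q ∈ M) (hsM : s ∈ M)
    (hsae : IsSelfAdjoint e) (hidee : IsIdempotentElem e)
    (hsaq : IsSelfAdjoint q) (hideq : IsIdempotentElem q)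
    (hsas : IsSelfAdjoint s) (hides : IsIdempotentElem s)
    (hse : s * e = e) (hsq : s * q = q) (m : ℕ) :
    (τ.toFun e).re - (τ.toFun ((e*q*e)^(m+1))).re
      ≤ (τ.toFun s).re - (τ.toFun q).re := by
  -- basic consequences
  have hes : e * s = e := by
    have h := congrArg star hse
    rwa [star_mul, hsas.star_eq, hsae.star_eq] at h
  have hqs : q * s = q := by
    have h := congrArg star hsq
    rwa [star_mul, hsas.star_eq, hsaq.star_eq] at h
  set c : H →L[ℂ] H := e * q * e with hc
  have hcsa : IsSelfAdjoint c := by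
    rw [hc, IsSelfAdjoint, star_mul, star_mul, hsae.star_eq, hsaq.star_eq, mul_assoc]
  have hcM : c ∈ M := mul_mem (mul_mem heM hqM) heM
  have hcnonneg : 0 ≤ c := by
    have h0 := star_mul_self_nonneg (q * e)
    have h1 : star (q * e) * (q * e) = c := by
      rw [star_mul, hsaq.star_eq, hsae.star_eq, hc]
      simp only [mul_assoc]
      rw [← mul_assoc q q e, hideq.eq]
    rwa [h1] at h0
  have hce : c * e = c := by
    rw [hc]; simp only [mul_assoc]; rw [hidee.eq]
  have hcpow_e : ∀ k : ℕ, c^(k+1) * e = c^(k+1) := by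
    intro k
    rw [pow_succ, mul_assoc, hce]
  -- the projection f = s - q
  have hfsa : IsSelfAdjoint (s - q) := hsas.sub hsaq
  have hfidem : IsIdempotentElem (s - q) := by
    rw [IsIdempotentElem, mul_sub, sub_mul, sub_mul, hides.eq, hideq.eq, hsq, hqs]
    abel
  have hfM : (s - q) ∈ M := sub_mem hsM hqM
  -- y
  set y : H →L[ℂ] H := (s - q) * e with hy
  have hyM : y ∈ M := mul_mem hfM heM
  have hystar : star y = e * (s - q) := by
    rw [hy, star_mul, hfsa.star_eq, hsae.star_eq]
  have hysy : star y * y = e - c := by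
    rw [hystar, hy, mul_assoc, ← mul_assoc (s-q) (s-q) e, hfidem.eq]
    rw [sub_mul, hse, mul_sub, hidee.eq, hc, ← mul_assoc]
  -- the geometric sum
  set h : H →L[ℂ] H := ∑ k ∈ Finset.range (m+1), c^k with hh
  have hhM : h ∈ M := sum_mem (fun k _ => pow_mem hcM k)
  have hgeom_e : h * (e - c) = e - c^(m+1) := geom_aux hce m
  -- G = sqrt of h in the cfc of c
  set G : H →L[ℂ] H := cfc (fun t : ℝ => Real.sqrt (∑ k ∈ Finset.range (m+1), t^k)) c with hG
  have hGcont : Continuous (fun t : ℝ => Real.sqrt (∑ k ∈ Finset.range (m+1), t^k)) := by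
    apply Real.continuous_sqrt.comp
    exact continuous_finset_sum _ (fun k _ => continuous_pow k)
  have hGsa : IsSelfAdjoint G := cfc_predicate _ c
  have hGG : G * G = h := by
    rw [hG, ← cfc_mul _ _ c hGcont.continuousOn hGcont.continuousOn]
    have hEq : (spectrum ℝ c).EqOn
        (fun t => Real.sqrt (∑ k ∈ Finset.range (m+1), t^k) *
          Real.sqrt (∑ k ∈ Finset.range (m+1), t^k))
        (fun t => ∑ k ∈ Finset.range (m+1), t^k) := by
      intro t ht
      have htnn : 0 ≤ t := spectrum_nonneg_of_nonneg hcnonneg ht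
      exact Real.mul_self_sqrt (Finset.sum_nonneg (fun k _ => pow_nonneg htnn k))
    rw [cfc_congr hEq]
    rw [show (fun t : ℝ => ∑ k ∈ Finset.range (m+1), t^k)
      = ∑ k ∈ Finset.range (m+1), (fun t : ℝ => t^k) by ext t; simp]
    rw [cfc_sum _ c _ (fun i _ => (continuous_pow i).continuousOn)]
    rw [hh]
    exact Finset.sum_congr rfl fun k _ => cfc_pow_id c k hcsa
  have hGc : Commute G c := by
    have := cfc_commute_cfc (R := ℝ) (fun t => Real.sqrt (∑ k ∈ Finset.range (m+1), t^k)) id c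
    rwa [cfc_id ℝ c] at this
  -- x = y * G
  set x : H →L[ℂ] H := y * G with hx
  have hxx : star x * x = G * (star y * y) * G := by
    rw [hx, star_mul, hGsa.star_eq, mul_assoc, ← mul_assoc (star y) y G, ← mul_assoc]
  have he1 : e ≤ (1 : H →L[ℂ] H) := by
    have h0 := star_mul_self_nonneg ((1 : H →L[ℂ] H) - e)
    have h1 : star ((1 : H →L[ℂ] H) - e) * (1 - e) = 1 - e := by
      rw [star_sub, star_one, hsae.star_eq, mul_sub, sub_mul, sub_mul, hidee.eq,
        one_mul, mul_one, one_mul]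
      abel
    rw [h1] at h0
    exact sub_nonneg.mp h0
  have hcm1_nonneg : 0 ≤ c^(m+1) := by
    have hrw : c^(m+1) = cfc (fun t : ℝ => t^(m+1)) c := (cfc_pow_id c (m+1) hcsa).symm
    rw [hrw]
    apply cfc_nonneg
    intro t ht
    exact pow_nonneg (spectrum_nonneg_of_nonneg hcnonneg ht) _
  have hxx_le : star x * x ≤ 1 := by
    rw [hxx, hysy]
    calc G * (e - c) * G ≤ G * (1 - c) * G := by
          have := star_left_conjugate_le_conjugate (sub_le_sub_right he1 c) G
          rwa [hGsa.star_eq] at this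
      _ = 1 - c^(m+1) := by
          have hG1c : Commute G (1 - c) := (Commute.one_right G).sub_right hGc
          rw [mul_assoc, ← hG1c.eq, ← mul_assoc, hGG]
          have hgm := geom_sum_mul c (m+1)
          have : h * (1 - c) = -(h * (c - 1)) := by rw [← mul_neg, neg_sub]
          rw [this, hh, hgm, neg_sub]
      _ ≤ 1 := by
          have : (0 : H →L[ℂ] H) ≤ c^(m+1) := hcm1_nonneg
          calc (1 : H →L[ℂ] H) - c^(m+1) ≤ 1 - 0 := by
                exact sub_le_sub_left this 1
            _ = 1 := sub_zero 1
  have hxx_nonneg : 0 ≤ star x * x := star_mul_self_nonneg x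
  have hnorm1 : ‖star x * x‖ ≤ 1 :=
    (CStarAlgebra.norm_le_one_iff_of_nonneg _ hxx_nonneg).mpr hxx_le
  have hnorm2 : ‖x * star x‖ ≤ 1 := by
    rwa [CStarRing.norm_self_mul_star, ← CStarRing.norm_star_mul_self]
  -- g
  set g : H →L[ℂ] H := y * h * star y with hg
  have hxsx : x * star x = g := by
    rw [hx, star_mul, hGsa.star_eq, hg, ← hGG]
    rw [mul_assoc, ← mul_assoc G G (star y), ← mul_assoc]
  have hgnonneg : 0 ≤ g := hxsx ▸ mul_star_self_nonneg x
  have hgle1 : g ≤ 1 := by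
    rw [← hxsx]
    exact (CStarAlgebra.norm_le_one_iff_of_nonneg _ (hxsx ▸ hgnonneg)).mp hnorm2
  have hfy : (s - q) * y = y := by
    rw [hy, ← mul_assoc, hfidem.eq]
  have hyf : star y * (s - q) = star y := by
    have := congrArg star hfy
    rwa [star_mul, hfsa.star_eq] at this
  have hfgf : (s - q) * g * (s - q) = g := by
    rw [hg]
    calc (s - q) * (y * h * star y) * (s - q)
        = (s - q) * y * h * (star y * (s - q)) := by simp only [mul_assoc]
      _ = y * h * star y := by rw [hfy, hyf]
  have hgf : g ≤ s - q := by
    have hconj := star_left_conjugate_le_conjugate hgle1 (s - q)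
    rw [hfsa.star_eq, mul_one, hfidem.eq, hfgf] at hconj
    exact hconj
  have hgM : g ∈ M := mul_mem (mul_mem hyM hhM) (star_mem hyM)
  -- trace computation
  have htr1 : τ.toFun (e - c^(m+1)) = τ.toFun ((h * star y) * y) := by
    rw [← hgeom_e, ← hysy, mul_assoc]
  have htr2 : τ.toFun ((h * star y) * y) = τ.toFun g := by
    rw [τ.tracial _ (mul_mem hhM (star_mem hyM)) _ hyM, hg, ← mul_assoc]
  have htr3 : (τ.toFun g).re ≤ (τ.toFun (s - q)).re := tr_mono τ hgM hfM hgf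
  have lhs_eq : (τ.toFun e).re - (τ.toFun (c^(m+1))).re = (τ.toFun g).re := by
    rw [← htr2, ← htr1, map_sub, Complex.sub_re]
  rw [hc] at lhs_eq
  rw [lhs_eq]
  have rhs_eq : (τ.toFun (s - q)).re = (τ.toFun s).re - (τ.toFun q).re := by
    rw [map_sub, Complex.sub_re]
  rw [← rhs_eq]
  exact htr3


/-- The meet of two projections in `M`, together with trace convergence. -/
lemma meetM (τ : FaithfulNormalTracialState H M) {e q : H →L[ℂ] H}
    (heM : e ∈ M) (hqM : q ∈ M)
    (hsae : IsSelfAdjoint e) (hidee : IsIdempotentElem e)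
    (hsaq : IsSelfAdjoint q) (hideq : IsIdempotentElem q) :
    ∃ r : H →L[ℂ] H, r ∈ M ∧ IsSelfAdjoint r ∧ IsIdempotentElem r ∧
      LinearMap.range (r : H →ₗ[ℂ] H) = LinearMap.range (e : H →ₗ[ℂ] H) ⊓ LinearMap.range (q : H →ₗ[ℂ] H) ∧
      Tendsto (fun m => (τ.toFun ((e*q*e)^m)).re) atTop (𝓝 ((τ.toFun r).re)) := by
  obtain ⟨r, hrsa, hridem, hrange, hrF, hrcomm⟩ := meet_exists hsae hidee hsaq hideq
  have hcM : e*q*e ∈ M := mul_mem (mul_mem heM hqM) heM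
  have hrM : r ∈ M := by
    apply mem_vna_of_commutes
    intro z hz
    apply hrcomm
    have hze : Commute z e := (hz e heM).symm
    have hzq : Commute z q := (hz q hqM).symm
    exact ((hze.mul_right hzq).mul_right hze).eq
  refine ⟨r, hrM, hrsa, hridem, hrange, ?_⟩
  have hnormal := τ.normal (fun m => (e*q*e)^m) r (fun m => pow_mem hcM m) hrM
    ⟨1, fun m => ContinuousLinearMap.opNorm_le_bound _ zero_le_one
      (fun ξ => by rw [one_mul]; exact cpow_contract hsae hidee hsaq hideq m ξ)⟩ hrF
  exact (Complex.continuous_re.tendsto _).comp hnormal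

/-- Submodularity-type trace inequality for two projections under `s`. -/
lemma meet_trace_ineq (τ : FaithfulNormalTracialState H M) {a b s r : H →L[ℂ] H}
    (haM : a ∈ M) (hbM : b ∈ M) (hsM : s ∈ M) (hrM : r ∈ M)
    (hsaa : IsSelfAdjoint a) (hidea : IsIdempotentElem a)
    (hsab : IsSelfAdjoint b) (hideb : IsIdempotentElem b)
    (hsas : IsSelfAdjoint s) (hides : IsIdempotentElem s)
    (hsar : IsSelfAdjoint r) (hider : IsIdempotentElem r)
    (hsa : s * a = a) (hsb : s * b = b)
    (hrange : LinearMap.range (r : H →ₗ[ℂ] H) = LinearMap.range (a : H →ₗ[ℂ] H) ⊓ LinearMap.range (b : H →ₗ[ℂ] H)) :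
    (τ.toFun a).re + (τ.toFun b).re ≤ (τ.toFun s).re + (τ.toFun r).re := by
  obtain ⟨r', hr'M, hr'sa, hr'idem, hr'range, hr'tendsto⟩ :=
    meetM τ haM hbM hsaa hidea hsab hideb
  have hrr : r' = r :=
    proj_eq_of_range_eq hr'sa hsar hr'idem hider (hr'range.trans hrange.symm)
  subst hrr
  have hkey : ∀ m : ℕ, (τ.toFun a).re - (τ.toFun ((a*b*a)^(m+1))).re
      ≤ (τ.toFun s).re - (τ.toFun b).re := fun m =>
    key_ineq τ haM hbM hsM hsaa hidea hsab hideb hsas hides hsa hsb m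
  have hshift : Tendsto (fun m => (τ.toFun ((a*b*a)^(m+1))).re) atTop
      (𝓝 ((τ.toFun r').re)) := hr'tendsto.comp (tendsto_add_atTop_nat 1)
  have hlim : Tendsto (fun m => (τ.toFun a).re - (τ.toFun ((a*b*a)^(m+1))).re) atTop
      (𝓝 ((τ.toFun a).re - (τ.toFun r').re)) := tendsto_const_nhds.sub hshift
  have hfinal : (τ.toFun a).re - (τ.toFun r').re ≤ (τ.toFun s).re - (τ.toFun b).re :=
    le_of_tendsto hlim (Eventually.of_forall hkey)
  linarith


/-- trace difference formula for nested projections -/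
lemma proj_diff_sq {p' p : H →L[ℂ] H}
    (hsap' : IsSelfAdjoint p') (hsap : IsSelfAdjoint p)
    (hidep' : IsIdempotentElem p') (hidep : IsIdempotentElem p)
    (hle : LinearMap.range (p' : H →ₗ[ℂ] H) ≤ LinearMap.range (p : H →ₗ[ℂ] H)) :
    star (p' - p) * (p' - p) = p - p' := by
  have h1 : p * p' = p' := comp_eq_of_range_le hidep' hidep hle
  have h2 : p' * p = p' := comp_eq_of_range_le' hsap' hsap hidep' hidep hle
  have hstar : star (p' - p) = p' - p := by rw [star_sub, hsap'.star_eq, hsap.star_eq]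
  rw [hstar, mul_sub, sub_mul, sub_mul, hidep'.eq, hidep.eq, h1, h2]
  abel


end Aux

end Stmt4Aux

/-- If `Pₙ ≤ P`, `Qₙ ≤ Q` are projections in a tracial von Neumann algebra with
`Pₙ → P` and `Qₙ → Q` in `‖·‖₂`, then `Pₙ ∧ Qₙ → P ∧ Q` in `‖·‖₂`.  `Sn n` denotes the meet
`Pₙ ∧ Qₙ` and `S` the meet `P ∧ Q`. -/
theorem stmt_4 {H : Type*} [NormedAddCommGroup H] [InnerProductSpace ℂ H] [CompleteSpace H]
    (M : VonNeumannAlgebra H) (τ : FaithfulNormalTracialState H M)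
    (P Q S : H →L[ℂ] H) (Pn Qn Sn : ℕ → H →L[ℂ] H)
    (hPM : P ∈ M) (hQM : Q ∈ M) (hPnM : ∀ n, Pn n ∈ M) (hQnM : ∀ n, Qn n ∈ M)
    (hP : IsSelfAdjoint P ∧ IsIdempotentElem P)
    (hQ : IsSelfAdjoint Q ∧ IsIdempotentElem Q)
    (hPn : ∀ n, IsSelfAdjoint (Pn n) ∧ IsIdempotentElem (Pn n))
    (hQn : ∀ n, IsSelfAdjoint (Qn n) ∧ IsIdempotentElem (Qn n))
    (hPnP : ∀ n, LinearMap.range (Pn n : H →ₗ[ℂ] H) ≤ LinearMap.range (P : H →ₗ[ℂ] H))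
    (hQnQ : ∀ n, LinearMap.range (Qn n : H →ₗ[ℂ] H) ≤ LinearMap.range (Q : H →ₗ[ℂ] H))
    (hPconv : Tendsto (fun n => norm2 τ (Pn n - P)) atTop (𝓝 0))
    (hQconv : Tendsto (fun n => norm2 τ (Qn n - Q)) atTop (𝓝 0))
    (hSn : ∀ n, IsSelfAdjoint (Sn n) ∧ IsIdempotentElem (Sn n) ∧
      LinearMap.range (Sn n : H →ₗ[ℂ] H) = LinearMap.range (Pn n : H →ₗ[ℂ] H) ⊓ LinearMap.range (Qn n : H →ₗ[ℂ] H))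
    (hS : IsSelfAdjoint S ∧ IsIdempotentElem S ∧
      LinearMap.range (S : H →ₗ[ℂ] H) = LinearMap.range (P : H →ₗ[ℂ] H) ⊓ LinearMap.range (Q : H →ₗ[ℂ] H)) :
    Tendsto (fun n => norm2 τ (Sn n - S)) atTop (𝓝 0) := by
  obtain ⟨hsaP, hideP⟩ := hP
  obtain ⟨hsaQ, hideQ⟩ := hQ
  obtain ⟨hsaS, hideS, hrangeS⟩ := hS
  -- S ∈ M
  have hSM : S ∈ M := by
    obtain ⟨r, hrM, hrsa, hridem, hrange, -⟩ := Stmt4Aux.meetM τ hPM hQM hsaP hideP hsaQ hideQ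
    have : r = S := Stmt4Aux.proj_eq_of_range_eq hrsa hsaS hridem hideS (hrange.trans hrangeS.symm)
    rwa [← this]
  -- Sn n ∈ M
  have hSnM : ∀ n, Sn n ∈ M := by
    intro n
    obtain ⟨r, hrM, hrsa, hridem, hrange, -⟩ :=
      Stmt4Aux.meetM τ (hPnM n) (hQnM n) (hPn n).1 (hPn n).2 (hQn n).1 (hQn n).2
    have : r = Sn n := Stmt4Aux.proj_eq_of_range_eq hrsa (hSn n).1 hridem (hSn n).2.1
      (hrange.trans (hSn n).2.2.symm)
    rwa [← this]
  -- range facts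
  have hrangeSP : LinearMap.range (S : H →ₗ[ℂ] H) ≤ LinearMap.range (P : H →ₗ[ℂ] H) := hrangeS.le.trans inf_le_left
  have hrangeSQ : LinearMap.range (S : H →ₗ[ℂ] H) ≤ LinearMap.range (Q : H →ₗ[ℂ] H) := hrangeS.le.trans inf_le_right
  have hrangeSnS : ∀ n, LinearMap.range (Sn n : H →ₗ[ℂ] H) ≤ LinearMap.range (S : H →ₗ[ℂ] H) := by
    intro n
    rw [(hSn n).2.2, hrangeS]
    exact inf_le_inf (hPnP n) (hQnQ n)
  -- key inequality
  have key : ∀ n, (τ.toFun S).re - (τ.toFun (Sn n)).re ≤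
      ((τ.toFun P).re - (τ.toFun (Pn n)).re) + ((τ.toFun Q).re - (τ.toFun (Qn n)).re) := by
    intro n
    obtain ⟨An, hAnM, hAnsa, hAnidem, hAnrange, -⟩ :=
      Stmt4Aux.meetM τ hSM (hPnM n) hsaS hideS (hPn n).1 (hPn n).2
    obtain ⟨Bn, hBnM, hBnsa, hBnidem, hBnrange, -⟩ :=
      Stmt4Aux.meetM τ hSM (hQnM n) hsaS hideS (hQn n).1 (hQn n).2
    have h1 : (τ.toFun S).re + (τ.toFun (Pn n)).re ≤
        (τ.toFun P).re + (τ.toFun An).re :=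
      Stmt4Aux.meet_trace_ineq τ hSM (hPnM n) hPM hAnM hsaS hideS (hPn n).1 (hPn n).2
        hsaP hideP hAnsa hAnidem
        (Stmt4Aux.comp_eq_of_range_le hideS hideP hrangeSP)
        (Stmt4Aux.comp_eq_of_range_le (hPn n).2 hideP (hPnP n)) hAnrange
    have h2 : (τ.toFun S).re + (τ.toFun (Qn n)).re ≤
        (τ.toFun Q).re + (τ.toFun Bn).re :=
      Stmt4Aux.meet_trace_ineq τ hSM (hQnM n) hQM hBnM hsaS hideS (hQn n).1 (hQn n).2
        hsaQ hideQ hBnsa hBnidem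
        (Stmt4Aux.comp_eq_of_range_le hideS hideQ hrangeSQ)
        (Stmt4Aux.comp_eq_of_range_le (hQn n).2 hideQ (hQnQ n)) hBnrange
    have hPnQnS : LinearMap.range (Pn n : H →ₗ[ℂ] H) ⊓ LinearMap.range (Qn n : H →ₗ[ℂ] H) ≤ LinearMap.range (S : H →ₗ[ℂ] H) := by
      rw [hrangeS]; exact inf_le_inf (hPnP n) (hQnQ n)
    have hrangeSnAB : LinearMap.range (Sn n : H →ₗ[ℂ] H) = LinearMap.range (An : H →ₗ[ℂ] H) ⊓ LinearMap.range (Bn : H →ₗ[ℂ] H) := by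
      rw [hAnrange, hBnrange, (hSn n).2.2]
      apply le_antisymm
      · exact le_inf (le_inf hPnQnS inf_le_left) (le_inf hPnQnS inf_le_right)
      · exact le_inf (inf_le_left.trans inf_le_right) (inf_le_right.trans inf_le_right)
    have h3 : (τ.toFun An).re + (τ.toFun Bn).re ≤
        (τ.toFun S).re + (τ.toFun (Sn n)).re :=
      Stmt4Aux.meet_trace_ineq τ hAnM hBnM hSM (hSnM n) hAnsa hAnidem hBnsa hBnidem
        hsaS hideS (hSn n).1 (hSn n).2.1
        (Stmt4Aux.comp_eq_of_range_le hAnidem hideS (hAnrange.le.trans inf_le_left))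
        (Stmt4Aux.comp_eq_of_range_le hBnidem hideS (hBnrange.le.trans inf_le_left)) hrangeSnAB
    linarith
  -- convergence of trace differences
  have hPtr : Tendsto (fun n => (τ.toFun P).re - (τ.toFun (Pn n)).re) atTop (𝓝 0) := by
    have hform : ∀ n, norm2 τ (Pn n - P)
        = Real.sqrt ((τ.toFun P).re - (τ.toFun (Pn n)).re) := by
      intro n
      rw [norm2, Stmt4Aux.proj_diff_sq (hPn n).1 hsaP (hPn n).2 hideP (hPnP n), map_sub, Complex.sub_re]
    have hnn : ∀ n, 0 ≤ (τ.toFun P).re - (τ.toFun (Pn n)).re := by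
      intro n
      have h0 := (τ.pos (Pn n - P) (sub_mem (hPnM n) hPM)).1
      rwa [Stmt4Aux.proj_diff_sq (hPn n).1 hsaP (hPn n).2 hideP (hPnP n), map_sub, Complex.sub_re] at h0
    have hsq : Tendsto (fun n => norm2 τ (Pn n - P) * norm2 τ (Pn n - P)) atTop (𝓝 0) := by
      have := hPconv.mul hPconv
      rwa [mul_zero] at this
    refine hsq.congr (fun n => ?_)
    rw [hform n, Real.mul_self_sqrt (hnn n)]
  have hQtr : Tendsto (fun n => (τ.toFun Q).re - (τ.toFun (Qn n)).re) atTop (𝓝 0) := by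
    have hform : ∀ n, norm2 τ (Qn n - Q)
        = Real.sqrt ((τ.toFun Q).re - (τ.toFun (Qn n)).re) := by
      intro n
      rw [norm2, Stmt4Aux.proj_diff_sq (hQn n).1 hsaQ (hQn n).2 hideQ (hQnQ n), map_sub, Complex.sub_re]
    have hnn : ∀ n, 0 ≤ (τ.toFun Q).re - (τ.toFun (Qn n)).re := by
      intro n
      have h0 := (τ.pos (Qn n - Q) (sub_mem (hQnM n) hQM)).1
      rwa [Stmt4Aux.proj_diff_sq (hQn n).1 hsaQ (hQn n).2 hideQ (hQnQ n), map_sub, Complex.sub_re] at h0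
    have hsq : Tendsto (fun n => norm2 τ (Qn n - Q) * norm2 τ (Qn n - Q)) atTop (𝓝 0) := by
      have := hQconv.mul hQconv
      rwa [mul_zero] at this
    refine hsq.congr (fun n => ?_)
    rw [hform n, Real.mul_self_sqrt (hnn n)]
  -- squeeze
  have hSnn : ∀ n, 0 ≤ (τ.toFun S).re - (τ.toFun (Sn n)).re := by
    intro n
    have h0 := (τ.pos (Sn n - S) (sub_mem (hSnM n) hSM)).1
    rwa [Stmt4Aux.proj_diff_sq (hSn n).1 hsaS (hSn n).2.1 hideS (hrangeSnS n),
      map_sub, Complex.sub_re] at h0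
  have hsqueeze : Tendsto (fun n => (τ.toFun S).re - (τ.toFun (Sn n)).re) atTop (𝓝 0) := by
    apply squeeze_zero hSnn key
    have := hPtr.add hQtr
    rwa [add_zero] at this
  have hform : ∀ n, norm2 τ (Sn n - S)
      = Real.sqrt ((τ.toFun S).re - (τ.toFun (Sn n)).re) := by
    intro n
    rw [norm2, Stmt4Aux.proj_diff_sq (hSn n).1 hsaS (hSn n).2.1 hideS (hrangeSnS n),
      map_sub, Complex.sub_re]
  have hfinal : Tendsto (fun n => Real.sqrt ((τ.toFun S).re - (τ.toFun (Sn n)).re))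
      atTop (𝓝 0) := by
    have := (Real.continuous_sqrt.tendsto 0).comp hsqueeze
    rwa [Real.sqrt_zero] at this
  exact hfinal.congr (fun n => (hform n).symm)
end

section
/- Let M be a von Neumann algebra with a faithful normal tracial state τ. Suppose P, Q, R are projections in M with P ≤ R. Then (P ∨ Q) ∧ R = P ∨ (Q ∧ R). -/
open Filter Topology

open ContinuousLinearMap
open scoped InnerProductSpace
set_option linter.unusedSectionVars false
set_option maxHeartbeats 800000
section ModularAux2

variable {H : Type*} [NormedAddCommGroup H] [InnerProductSpace ℂ H] [CompleteSpace H]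

-- copies from aux1 (will be merged)
lemma ml_fix {e : H →L[ℂ] H} (he : IsIdempotentElem e) {x : H}
    (hx : x ∈ LinearMap.range (e : H →ₗ[ℂ] H)) : e x = x := by
  obtain ⟨y, rfl⟩ := hx
  have := congrArg (fun t : H →L[ℂ] H => t y) he
  simpa [ContinuousLinearMap.mul_apply] using this

lemma ml_comp {e f : H →L[ℂ] H} (he : IsIdempotentElem e)
    (h : LinearMap.range (f : H →ₗ[ℂ] H) ≤ LinearMap.range (e : H →ₗ[ℂ] H)) : e * f = f := by
  ext x
  exact ml_fix he (h ⟨x, rfl⟩)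

lemma ml_comp_right {e f : H →L[ℂ] H} (hesa : IsSelfAdjoint e) (hfsa : IsSelfAdjoint f)
    (he : IsIdempotentElem e) (h : LinearMap.range (f : H →ₗ[ℂ] H) ≤ LinearMap.range (e : H →ₗ[ℂ] H)) : f * e = f := by
  have h1 := congrArg star (ml_comp he h)
  rwa [star_mul, hesa.star_eq, hfsa.star_eq] at h1

lemma ml_orth_range (y : H →L[ℂ] H) :
    (LinearMap.range (y : H →ₗ[ℂ] H))ᗮ = LinearMap.ker (↑(star y) : H →ₗ[ℂ] H) := by
  ext η
  simp only [Submodule.mem_orthogonal, LinearMap.mem_ker, LinearMap.mem_range,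
    forall_exists_index]
  constructor
  · intro h
    have h1 : ⟪star y η, star y η⟫_ℂ = 0 := by
      rw [star_eq_adjoint, adjoint_inner_right]
      exact h (y ((ContinuousLinearMap.adjoint y) η)) _ rfl
    exact inner_self_eq_zero.mp h1
  · intro h u ξ hξ
    subst hξ
    simp only [ContinuousLinearMap.coe_coe] at h ⊢
    rw [← adjoint_inner_right, ← star_eq_adjoint, h, inner_zero_right]

lemma ml_closure_range (y : H →L[ℂ] H) :
    (LinearMap.range (y : H →ₗ[ℂ] H)).topologicalClosure = (LinearMap.ker (↑(star y) : H →ₗ[ℂ] H))ᗮ := by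
  rw [← ml_orth_range, Submodule.orthogonal_orthogonal_eq_closure]

lemma ml_isClosed_range {e : H →L[ℂ] H} (he : IsIdempotentElem e) :
    IsClosed ((LinearMap.range (e : H →ₗ[ℂ] H) : Submodule ℂ H) : Set H) := by
  have h1 : (LinearMap.range (e : H →ₗ[ℂ] H) : Submodule ℂ H) = LinearMap.ker (↑(1 - e) : H →ₗ[ℂ] H) := by
    ext x
    simp only [LinearMap.mem_range, LinearMap.mem_ker, ContinuousLinearMap.coe_coe, ContinuousLinearMap.sub_apply,
      ContinuousLinearMap.one_apply, sub_eq_zero]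
    constructor
    · rintro ⟨y, rfl⟩
      exact (ml_fix he ⟨y, rfl⟩).symm
    · intro hx
      exact ⟨x, hx.symm⟩
  rw [h1]
  exact ContinuousLinearMap.isClosed_ker _

lemma ml_range_eq_orth_ker {e : H →L[ℂ] H} (hsa : IsSelfAdjoint e) (hid : IsIdempotentElem e) :
    LinearMap.range (e : H →ₗ[ℂ] H) = (LinearMap.ker (e : H →ₗ[ℂ] H))ᗮ := by
  have h1 : (LinearMap.range (e : H →ₗ[ℂ] H)).topologicalClosure = LinearMap.range (e : H →ₗ[ℂ] H) :=
    (ml_isClosed_range hid).submodule_topologicalClosure_eq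
  rw [← h1, ml_closure_range, hsa.star_eq]

-- new material

lemma ml_sub_idem {e g : H →L[ℂ] H} (he : IsIdempotentElem e) (hg : IsIdempotentElem g)
    (heg : e * g = g) (hge : g * e = g) : IsIdempotentElem (e - g) := by
  rw [IsIdempotentElem, sub_mul, mul_sub, mul_sub, he.eq, hg.eq, heg, hge]
  abel

lemma ml_right_support {e f g : H →L[ℂ] H}
    (hesa : IsSelfAdjoint e) (heid : IsIdempotentElem e)
    (hfsa : IsSelfAdjoint f) (hfid : IsIdempotentElem f)
    (hgsa : IsSelfAdjoint g) (hgid : IsIdempotentElem g)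
    (hg : LinearMap.range (g : H →ₗ[ℂ] H) = LinearMap.range (e : H →ₗ[ℂ] H) ⊓ LinearMap.range (f : H →ₗ[ℂ] H)) :
    (LinearMap.range (↑(e * (1 - f)) : H →ₗ[ℂ] H)).topologicalClosure = LinearMap.range (↑(e - g) : H →ₗ[ℂ] H) := by
  have hge_le : LinearMap.range (g : H →ₗ[ℂ] H) ≤ LinearMap.range (e : H →ₗ[ℂ] H) := hg ▸ inf_le_left
  have hgf_le : LinearMap.range (g : H →ₗ[ℂ] H) ≤ LinearMap.range (f : H →ₗ[ℂ] H) := hg ▸ inf_le_right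
  have heg : e * g = g := ml_comp heid hge_le
  have hge : g * e = g := ml_comp_right hesa hgsa heid hge_le
  have hfg : f * g = g := ml_comp hfid hgf_le
  have hsa : IsSelfAdjoint (e - g) := hesa.sub hgsa
  have hid : IsIdempotentElem (e - g) := ml_sub_idem heid hgid heg hge
  have hstar : star (e * (1 - f)) = (1 - f) * e := by
    rw [star_mul, star_sub, star_one, hesa.star_eq, hfsa.star_eq]
  have hker : LinearMap.ker (↑((1 - f) * e) : H →ₗ[ℂ] H) = LinearMap.ker (↑(e - g) : H →ₗ[ℂ] H) := by
    ext ξ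
    simp only [LinearMap.mem_ker, ContinuousLinearMap.coe_coe, ContinuousLinearMap.mul_apply, ContinuousLinearMap.sub_apply,
      ContinuousLinearMap.one_apply, sub_eq_zero]
    constructor
    · intro h
      have hmem : e ξ ∈ LinearMap.range (g : H →ₗ[ℂ] H) := by
        rw [hg]
        exact ⟨⟨ξ, rfl⟩, ⟨e ξ, h.symm⟩⟩
      have h1 : g (e ξ) = e ξ := ml_fix hgid hmem
      have h2 : g (e ξ) = g ξ := by
        have := congrArg (fun t : H →L[ℂ] H => t ξ) hge
        simpa [ContinuousLinearMap.mul_apply] using this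
      rw [← h1, h2]
    · intro h
      have h3 : f (g ξ) = g ξ := by
        have := congrArg (fun t : H →L[ℂ] H => t ξ) hfg
        simpa [ContinuousLinearMap.mul_apply] using this
      rw [h, h3]
  rw [ml_closure_range, hstar, hker, ← ml_range_eq_orth_ker hsa hid]

lemma ml_image_closure {y : H →L[ℂ] H} {K N : Submodule ℂ H} (hN : IsClosed (N : Set H))
    (h : ∀ k ∈ K, y k ∈ N) {ξ : H} (hξ : ξ ∈ K.topologicalClosure) : y ξ ∈ N := by
  have hξ' : ξ ∈ closure (K : Set H) := by
    rwa [← Submodule.topologicalClosure_coe]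
  have h1 : y ξ ∈ closure (y '' (K : Set H)) :=
    image_closure_subset_closure_image y.continuous ⟨ξ, hξ', rfl⟩
  have h2 : closure (y '' (K : Set H)) ⊆ N := by
    rw [← hN.closure_eq]
    apply closure_mono
    rintro _ ⟨k, hk, rfl⟩
    exact h k hk
  exact h2 h1

lemma ml_proj (K : Submodule ℂ H) (hK : IsClosed (K : Set H)) :
    ∃ S : H →L[ℂ] H, IsSelfAdjoint S ∧ IsIdempotentElem S ∧ LinearMap.range (S : H →ₗ[ℂ] H) = K := by
  haveI : CompleteSpace K := hK.completeSpace_coe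
  refine ⟨K.starProjection, isSelfAdjoint_starProjection K, ?_, ?_⟩
  · rw [IsIdempotentElem]
    ext ξ
    have hmem : K.starProjection ξ ∈ K := (K.orthogonalProjection ξ).2
    simp only [ContinuousLinearMap.mul_apply]
    exact Submodule.starProjection_eq_self_iff.mpr hmem
  · apply le_antisymm
    · rintro _ ⟨ξ, rfl⟩
      exact (K.orthogonalProjection ξ).2
    · intro ξ hξ
      exact ⟨ξ, by simp [Submodule.starProjection_eq_self_iff.mpr hξ]⟩

lemma ml_inv {a : H →L[ℂ] H} (hsa : IsSelfAdjoint a)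
    (hpos : ∀ ξ : H, 0 ≤ (⟪a ξ, ξ⟫_ℂ).re) {ε : ℝ} (hε : 0 < ε) :
    ∃ v : H →L[ℂ] H, v * (a + (ε : ℂ) • 1) = 1 ∧ (a + (ε : ℂ) • 1) * v = 1 ∧
      ∀ ξ : H, ‖v ξ‖ ≤ ε⁻¹ * ‖ξ‖ := by
  set T : H →L[ℂ] H := a + (ε : ℂ) • 1 with hT
  have hTsa : IsSelfAdjoint T := by
    rw [IsSelfAdjoint, hT, star_add, hsa.star_eq, star_smul, star_one, Complex.star_def,
      Complex.conj_ofReal]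
  have hlow : ∀ ξ : H, ε * ‖ξ‖ ^ 2 ≤ (⟪T ξ, ξ⟫_ℂ).re := by
    intro ξ
    have h1 : T ξ = a ξ + (ε : ℂ) • ξ := by
      simp [hT, ContinuousLinearMap.add_apply, ContinuousLinearMap.smul_apply]
    have h2 : ⟪T ξ, ξ⟫_ℂ = ⟪a ξ, ξ⟫_ℂ + (ε : ℂ) * ⟪ξ, ξ⟫_ℂ := by
      rw [h1, inner_add_left, inner_smul_left, Complex.conj_ofReal]
    have h3 : ((ε : ℂ) * ⟪ξ, ξ⟫_ℂ).re = ε * ‖ξ‖ ^ 2 := by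
      rw [@inner_self_eq_norm_sq_to_K ℂ]
      simp [← Complex.ofReal_pow, ← Complex.ofReal_mul]
    rw [h2, Complex.add_re, h3]
    nlinarith [hpos ξ]
  have hbound : ∀ ξ : H, ε * ‖ξ‖ ≤ ‖T ξ‖ := by
    intro ξ
    rcases eq_or_ne ξ 0 with rfl | hξ0
    · simp
    · have hre : (⟪T ξ, ξ⟫_ℂ).re ≤ ‖T ξ‖ * ‖ξ‖ := by
        calc (⟪T ξ, ξ⟫_ℂ).re ≤ ‖⟪T ξ, ξ⟫_ℂ‖ := Complex.re_le_norm _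
          _ ≤ ‖T ξ‖ * ‖ξ‖ := norm_inner_le_norm _ _
      have h1 : ε * ‖ξ‖ ^ 2 ≤ ‖T ξ‖ * ‖ξ‖ := (hlow ξ).trans hre
      have h2 : 0 < ‖ξ‖ := norm_pos_iff.mpr hξ0
      nlinarith
  have hker : LinearMap.ker (T : H →ₗ[ℂ] H) = ⊥ := by
    rw [LinearMap.ker_eq_bot']
    intro ξ hξ
    rw [ContinuousLinearMap.coe_coe] at hξ
    have := hbound ξ
    rw [hξ, norm_zero] at this
    have h2 : ‖ξ‖ ≤ 0 := by nlinarith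
    exact norm_le_zero_iff.mp h2
  have hanti : AntilipschitzWith (⟨ε⁻¹, le_of_lt (inv_pos.mpr hε)⟩ : NNReal) T := by
    apply T.antilipschitz_of_bound
    intro ξ
    have h1 := hbound ξ
    show ‖ξ‖ ≤ ε⁻¹ * ‖T ξ‖
    have h2 : ε * ‖ξ‖ ≤ ε * (ε⁻¹ * ‖T ξ‖) := by
      rw [← mul_assoc, mul_inv_cancel₀ (ne_of_gt hε), one_mul]
      exact h1
    exact le_of_mul_le_mul_left h2 hε
  have hclosed : IsClosed ((LinearMap.range (T : H →ₗ[ℂ] H) : Submodule ℂ H) : Set H) := by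
    have h1 := hanti.isClosed_range T.uniformContinuous
    rwa [show ((LinearMap.range (T : H →ₗ[ℂ] H) : Submodule ℂ H) : Set H) = Set.range T from
      LinearMap.coe_range _]
  have hdense : (LinearMap.range (T : H →ₗ[ℂ] H))ᗮ = ⊥ := by
    rw [ml_orth_range, hTsa.star_eq, hker]
  have hrange : LinearMap.range (T : H →ₗ[ℂ] H) = ⊤ := by
    have h1 : (LinearMap.range (T : H →ₗ[ℂ] H)).topologicalClosure = LinearMap.range (T : H →ₗ[ℂ] H) :=
      hclosed.submodule_topologicalClosure_eq
    rw [← h1, ← Submodule.orthogonal_orthogonal_eq_closure, hdense,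
      Submodule.bot_orthogonal_eq_top]
  let e := ContinuousLinearEquiv.ofBijective T hker hrange
  have heT : ∀ ξ, e ξ = T ξ := fun ξ => rfl
  refine ⟨(e.symm : H →L[ℂ] H), ?_, ?_, ?_⟩
  · ext ξ
    simp only [ContinuousLinearMap.mul_apply, ContinuousLinearMap.one_apply,
      ContinuousLinearEquiv.coe_coe]
    rw [← heT]
    exact e.symm_apply_apply ξ
  · ext ξ
    simp only [ContinuousLinearMap.mul_apply, ContinuousLinearMap.one_apply,
      ContinuousLinearEquiv.coe_coe]
    rw [show T ((e.symm) ξ) = e (e.symm ξ) from rfl]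
    exact e.apply_symm_apply ξ
  · intro ξ
    have h1 := hbound ((e.symm : H →L[ℂ] H) ξ)
    rw [show T ((e.symm : H →L[ℂ] H) ξ) = e (e.symm ξ) from rfl, e.apply_symm_apply] at h1
    calc ‖(e.symm : H →L[ℂ] H) ξ‖ = ε⁻¹ * (ε * ‖(e.symm : H →L[ℂ] H) ξ‖) := by
          field_simp
      _ ≤ ε⁻¹ * ‖ξ‖ := by
          apply mul_le_mul_of_nonneg_left h1 (le_of_lt (inv_pos.mpr hε))

lemma ml_closure_range_mul_star (x : H →L[ℂ] H) :
    (LinearMap.range (↑(x * star x) : H →ₗ[ℂ] H)).topologicalClosure =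
      (LinearMap.range (x : H →ₗ[ℂ] H)).topologicalClosure := by
  rw [ml_closure_range, ml_closure_range]
  congr 1
  have h1 : star (x * star x) = x * star x := by simp [star_mul]
  rw [h1]
  ext ξ
  simp only [LinearMap.mem_ker, ContinuousLinearMap.coe_coe, ContinuousLinearMap.mul_apply]
  constructor
  · intro h
    have h2 : ⟪star x ξ, star x ξ⟫_ℂ = 0 := by
      rw [star_eq_adjoint, adjoint_inner_right, ← ContinuousLinearMap.mul_apply,
        ← star_eq_adjoint]
      rw [show (x * star x) ξ = 0 from h]
      exact inner_zero_left _
    have h3 : star x ξ = 0 := inner_self_eq_zero.mp h2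
    exact h3
  · intro h
    rw [h, map_zero]


lemma ml_ker_eq_orth_range {e : H →L[ℂ] H} (hsa : IsSelfAdjoint e) :
    LinearMap.ker (e : H →ₗ[ℂ] H) = (LinearMap.range (e : H →ₗ[ℂ] H))ᗮ := by
  rw [ml_orth_range, hsa.star_eq]

lemma ml_sot {a e : H →L[ℂ] H} (hasa : IsSelfAdjoint a) (hesa : IsSelfAdjoint e)
    (heid : IsIdempotentElem e)
    (hre : (LinearMap.range (a : H →ₗ[ℂ] H)).topologicalClosure = LinearMap.range (e : H →ₗ[ℂ] H))
    {ε : ℕ → ℝ} (hεpos : ∀ n, 0 < ε n) (hεlim : Tendsto ε atTop (𝓝 0))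
    {v : ℕ → H →L[ℂ] H}
    (hv1 : ∀ n, v n * (a + (ε n : ℂ) • 1) = 1)
    (hv2 : ∀ n, (a + (ε n : ℂ) • 1) * v n = 1)
    (hv3 : ∀ n (ξ : H), ‖v n ξ‖ ≤ (ε n)⁻¹ * ‖ξ‖) (ξ : H) :
    Tendsto (fun n => (a * v n) ξ) atTop (𝓝 (e ξ)) := by
  have hεinv : ∀ n, ε n * (ε n)⁻¹ = 1 := fun n => mul_inv_cancel₀ (ne_of_gt (hεpos n))
  have hinv_apply : ∀ n (η : H), v n (a η) = η - (ε n : ℂ) • v n η := by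
    intro n η
    have h1 := congrArg (fun t : H →L[ℂ] H => t η) (hv1 n)
    simp only [ContinuousLinearMap.mul_apply, ContinuousLinearMap.add_apply,
      ContinuousLinearMap.smul_apply, ContinuousLinearMap.one_apply, map_add, map_smul] at h1
    exact eq_sub_of_add_eq h1
  have hgid : ∀ n, a * v n = 1 - (ε n : ℂ) • v n := by
    intro n
    have h1 := hv2 n
    rw [add_mul, smul_mul_assoc, one_mul] at h1
    exact eq_sub_of_add_eq h1
  have hnormc : ∀ n, ‖((ε n : ℝ) : ℂ)‖ = ε n := by
    intro n
    rw [Complex.norm_real, Real.norm_eq_abs, abs_of_pos (hεpos n)]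
  have hker : ∀ n (η : H), a η = 0 → (a * v n) η = 0 := by
    intro n η hη
    have h1 := hinv_apply n η
    rw [hη, map_zero, eq_comm, sub_eq_zero] at h1
    -- h1 : η = (ε n : ℂ) • v n η
    have hc : ((ε n : ℝ) : ℂ) ≠ 0 := by exact_mod_cast (ne_of_gt (hεpos n))
    have h4 : v n η = ((ε n : ℂ))⁻¹ • η := by
      calc v n η = ((ε n : ℂ))⁻¹ • ((ε n : ℂ) • v n η) := by
            rw [smul_smul, inv_mul_cancel₀ hc, one_smul]
        _ = ((ε n : ℂ))⁻¹ • η := by rw [← h1]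
    show a (v n η) = 0
    rw [h4, map_smul, hη, smul_zero]
  have hkere : ∀ η : H, e η = 0 → a η = 0 := by
    intro η hη
    have h1 : LinearMap.ker (e : H →ₗ[ℂ] H) = LinearMap.ker (a : H →ₗ[ℂ] H) := by
      rw [ml_ker_eq_orth_range hesa, ← hre, ← Submodule.orthogonal_orthogonal_eq_closure,
        Submodule.triorthogonal_eq_orthogonal, ml_orth_range, hasa.star_eq]
    have h2 : η ∈ LinearMap.ker (e : H →ₗ[ℂ] H) := LinearMap.mem_ker.mpr hη
    rw [h1] at h2
    exact LinearMap.mem_ker.mp h2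
  have hop : ∀ n (u : H), ‖(a * v n) u‖ ≤ 2 * ‖u‖ := by
    intro n u
    rw [hgid n]
    simp only [ContinuousLinearMap.sub_apply, ContinuousLinearMap.smul_apply,
      ContinuousLinearMap.one_apply]
    calc ‖u - (ε n : ℂ) • v n u‖ ≤ ‖u‖ + ‖(ε n : ℂ) • v n u‖ := norm_sub_le _ _
      _ = ‖u‖ + ε n * ‖v n u‖ := by rw [norm_smul, hnormc]
      _ ≤ ‖u‖ + ε n * ((ε n)⁻¹ * ‖u‖) := by nlinarith [hv3 n u, hεpos n]
      _ ≤ 2 * ‖u‖ := by rw [← mul_assoc, hεinv, one_mul]; linarith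
  have hrng : ∀ n (ρ : H), ‖(a * v n) (a ρ) - a ρ‖ ≤ 2 * (ε n * ‖ρ‖) := by
    intro n ρ
    have h1 : (a * v n) (a ρ) - a ρ = -(((ε n : ℂ)) • v n (a ρ)) := by
      rw [hgid n]
      simp only [ContinuousLinearMap.sub_apply, ContinuousLinearMap.smul_apply,
        ContinuousLinearMap.one_apply]
      abel
    have h2 : ‖v n (a ρ)‖ ≤ 2 * ‖ρ‖ := by
      rw [hinv_apply n ρ]
      calc ‖ρ - (ε n : ℂ) • v n ρ‖ ≤ ‖ρ‖ + ‖(ε n : ℂ) • v n ρ‖ := norm_sub_le _ _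
        _ = ‖ρ‖ + ε n * ‖v n ρ‖ := by rw [norm_smul, hnormc]
        _ ≤ ‖ρ‖ + ε n * ((ε n)⁻¹ * ‖ρ‖) := by nlinarith [hv3 n ρ, hεpos n]
        _ ≤ 2 * ‖ρ‖ := by rw [← mul_assoc, hεinv, one_mul]; linarith
    rw [h1, norm_neg, norm_smul, hnormc]
    nlinarith [hεpos n]
  -- main convergence on the closure of the range of a
  have main : ∀ ζ : H, ζ ∈ closure ((LinearMap.range (a : H →ₗ[ℂ] H) : Submodule ℂ H) : Set H) →
      Tendsto (fun n => (a * v n) ζ) atTop (𝓝 ζ) := by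
    intro ζ hζ
    rw [Metric.tendsto_atTop]
    intro δ hδ
    obtain ⟨η, hη_mem, hηδ⟩ := Metric.mem_closure_iff.mp hζ (δ/4) (by linarith)
    obtain ⟨ρ, rfl⟩ := hη_mem
    have hev : ∀ᶠ n in atTop, ε n * ‖ρ‖ < δ/8 := by
      have h1 := hεlim.eventually (gt_mem_nhds (show (0:ℝ) < δ/(8*(‖ρ‖+1)) by positivity))
      filter_upwards [h1] with n hn
      have hn' : ε n < δ/(8*(‖ρ‖+1)) := hn
      have hρ1 : (0:ℝ) < ‖ρ‖ + 1 := by positivity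
      calc ε n * ‖ρ‖ ≤ ε n * (‖ρ‖ + 1) := by nlinarith [hεpos n]
        _ < δ/(8*(‖ρ‖+1)) * (‖ρ‖+1) := by nlinarith [hεpos n]
        _ = δ/8 := by field_simp
    obtain ⟨N, hN⟩ := eventually_atTop.mp hev
    refine ⟨N, fun n hn => ?_⟩
    rw [dist_eq_norm]
    have hζρ : ‖ζ - a ρ‖ < δ/4 := by rwa [dist_eq_norm] at hηδ
    have key : (a * v n) ζ - ζ =
        ((a * v n) (ζ - a ρ)) + ((a * v n) (a ρ) - a ρ) + (a ρ - ζ) := by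
      rw [map_sub]; abel
    rw [key]
    have b1 : ‖(a * v n) (ζ - a ρ)‖ ≤ 2 * ‖ζ - a ρ‖ := hop n _
    have b2 := hrng n ρ
    have b3 : ‖a ρ - ζ‖ = ‖ζ - a ρ‖ := norm_sub_rev _ _
    have b4 := hN n hn
    calc ‖((a * v n) (ζ - a ρ)) + ((a * v n) (a ρ) - a ρ) + (a ρ - ζ)‖
        ≤ ‖(a * v n) (ζ - a ρ)‖ + ‖(a * v n) (a ρ) - a ρ‖ + ‖a ρ - ζ‖ := norm_add₃_le
      _ < δ := by rw [b3]; linarith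
  -- split ξ
  have h0 : a (ξ - e ξ) = 0 := by
    apply hkere
    rw [map_sub]
    have h1 := ml_fix heid (⟨ξ, rfl⟩ : e ξ ∈ LinearMap.range (e : H →ₗ[ℂ] H))
    rw [h1, sub_self]
  have hsplit : ∀ n, (a * v n) (e ξ) = (a * v n) ξ := by
    intro n
    have h1 := hker n (ξ - e ξ) h0
    rw [map_sub, sub_eq_zero] at h1
    exact h1.symm
  have heξ : e ξ ∈ closure ((LinearMap.range (a : H →ₗ[ℂ] H) : Submodule ℂ H) : Set H) := by
    have h1 : e ξ ∈ LinearMap.range (e : H →ₗ[ℂ] H) := ⟨ξ, rfl⟩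
    rw [← hre] at h1
    rwa [← Submodule.topologicalClosure_coe]
  exact (main (e ξ) heξ).congr hsplit


lemma ml_comm_apply {M : VonNeumannAlgebra H} {T X : H →L[ℂ] H}
    (hT : T ∈ M.commutant) (hX : X ∈ M) (ζ : H) : T (X ζ) = X (T ζ) := by
  have h := VonNeumannAlgebra.mem_commutant_iff.mp hT X hX
  have h2 := congrArg (fun y : H →L[ℂ] H => y ζ) h
  simpa [ContinuousLinearMap.mul_apply] using h2.symm

lemma ml_mem_of_commutes (M : VonNeumannAlgebra H) {e : H →L[ℂ] H}
    (h : ∀ T ∈ M.commutant, T * e = e * T) : e ∈ M := by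
  rw [← VonNeumannAlgebra.commutant_commutant M, VonNeumannAlgebra.mem_commutant_iff]
  intro g hg
  exact h g hg

lemma ml_mem_of_range (M : VonNeumannAlgebra H) {e : H →L[ℂ] H}
    (hesa : IsSelfAdjoint e) (heid : IsIdempotentElem e)
    (hinv : ∀ T, T ∈ M.commutant → ∀ ξ : H, T (e ξ) ∈ LinearMap.range (e : H →ₗ[ℂ] H)) : e ∈ M := by
  apply ml_mem_of_commutes
  intro T hT
  have h1 : e * (T * e) = T * e := by
    ext ξ
    exact ml_fix heid (hinv T hT ξ)
  have hT' : star T ∈ M.commutant := star_mem hT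
  have h2 : e * (star T * e) = star T * e := by
    ext ξ
    exact ml_fix heid (hinv _ hT' ξ)
  have h3 := congrArg star h2
  simp only [star_mul, star_star, hesa.star_eq] at h3
  -- h3 : e * T * e = e * T
  calc T * e = e * (T * e) := h1.symm
    _ = e * T * e := by rw [← mul_assoc]
    _ = e * T := h3

lemma ml_mem_inv (M : VonNeumannAlgebra H) {u v : H →L[ℂ] H} (hu : u ∈ M)
    (h1 : v * u = 1) (h2 : u * v = 1) : v ∈ M := by
  apply ml_mem_of_commutes
  intro T hT
  have hgu : u * T = T * u := VonNeumannAlgebra.mem_commutant_iff.mp hT u hu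
  calc T * v = 1 * (T * v) := (one_mul _).symm
    _ = (v * u) * (T * v) := by rw [h1]
    _ = v * (u * T * v) := by rw [mul_assoc, ← mul_assoc u T v]
    _ = v * (T * u * v) := by rw [hgu]
    _ = (v * T) * (u * v) := by rw [mul_assoc T u v, ← mul_assoc v T (u * v)]
    _ = v * T := by rw [h2, mul_one]

lemma ml_norm_bound {a vn : H →L[ℂ] H} {εn : ℝ} (hεn : 0 < εn)
    (h2 : (a + (εn : ℂ) • 1) * vn = 1) (h3 : ∀ ξ : H, ‖vn ξ‖ ≤ εn⁻¹ * ‖ξ‖) :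
    ‖a * vn‖ ≤ 2 := by
  have hgid : a * vn = 1 - (εn : ℂ) • vn := by
    have h1 := h2
    rw [add_mul, smul_mul_assoc, one_mul] at h1
    exact eq_sub_of_add_eq h1
  rw [hgid]
  apply ContinuousLinearMap.opNorm_le_bound _ (by norm_num)
  intro u
  simp only [ContinuousLinearMap.sub_apply, ContinuousLinearMap.smul_apply,
    ContinuousLinearMap.one_apply]
  have hn : ‖((εn : ℝ) : ℂ)‖ = εn := by
    rw [Complex.norm_real, Real.norm_eq_abs, abs_of_pos hεn]
  calc ‖u - (εn : ℂ) • vn u‖ ≤ ‖u‖ + ‖(εn : ℂ) • vn u‖ := norm_sub_le _ _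
    _ = ‖u‖ + εn * ‖vn u‖ := by rw [norm_smul, hn]
    _ ≤ ‖u‖ + εn * (εn⁻¹ * ‖u‖) := by nlinarith [h3 u, hεn]
    _ ≤ 2 * ‖u‖ := by rw [← mul_assoc, mul_inv_cancel₀ (ne_of_gt hεn), one_mul]; linarith

lemma ml_trace_eq (M : VonNeumannAlgebra H) (τ : FaithfulNormalTracialState H M)
    {x eL eR : H →L[ℂ] H} (hx : x ∈ M) (hLM : eL ∈ M) (hRM : eR ∈ M)
    (hLsa : IsSelfAdjoint eL) (hLid : IsIdempotentElem eL)
    (hRsa : IsSelfAdjoint eR) (hRid : IsIdempotentElem eR)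
    (hL : (LinearMap.range (x : H →ₗ[ℂ] H)).topologicalClosure = LinearMap.range (eL : H →ₗ[ℂ] H))
    (hR : (LinearMap.range (↑(star x) : H →ₗ[ℂ] H)).topologicalClosure = LinearMap.range (eR : H →ₗ[ℂ] H)) :
    τ.toFun eL = τ.toFun eR := by
  classical
  set a := x * star x with ha
  set b := star x * x with hb
  have haM : a ∈ M := mul_mem hx (star_mem hx)
  have hbM : b ∈ M := mul_mem (star_mem hx) hx
  have hasa : IsSelfAdjoint a := by rw [IsSelfAdjoint, ha, star_mul, star_star]
  have hbsa : IsSelfAdjoint b := by rw [IsSelfAdjoint, hb, star_mul, star_star]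
  have hapos : ∀ ξ : H, 0 ≤ (⟪a ξ, ξ⟫_ℂ).re := by
    intro ξ
    have h2 : ⟪a ξ, ξ⟫_ℂ = ⟪star x ξ, star x ξ⟫_ℂ := by
      rw [show a ξ = x (star x ξ) from rfl, star_eq_adjoint]
      exact (ContinuousLinearMap.adjoint_inner_right x ((ContinuousLinearMap.adjoint x) ξ) ξ).symm
    rw [h2, ← RCLike.re_to_complex]
    exact inner_self_nonneg
  have hbpos : ∀ ξ : H, 0 ≤ (⟪b ξ, ξ⟫_ℂ).re := by
    intro ξ
    have h2 : ⟪b ξ, ξ⟫_ℂ = ⟪x ξ, x ξ⟫_ℂ := by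
      rw [show b ξ = star x (x ξ) from rfl, star_eq_adjoint]
      exact ContinuousLinearMap.adjoint_inner_left x ξ (x ξ)
    rw [h2, ← RCLike.re_to_complex]
    exact inner_self_nonneg
  set ε : ℕ → ℝ := fun n => ((n : ℝ) + 1)⁻¹ with hεdef
  have hεpos : ∀ n, 0 < ε n := fun n => by positivity
  have hεlim : Tendsto ε atTop (𝓝 0) := by
    have h1 := tendsto_one_div_add_atTop_nhds_zero_nat (𝕜 := ℝ)
    simpa [hεdef, one_div] using h1
  choose v hv1 hv2 hv3 using fun n => ml_inv hasa hapos (hεpos n)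
  choose w hw1 hw2 hw3 using fun n => ml_inv hbsa hbpos (hεpos n)
  have hsmul_mem : ∀ (c : ℂ) (y : H →L[ℂ] H), y ∈ M → c • y ∈ M := fun c y hy =>
    M.toStarSubalgebra.smul_mem hy c
  have hTaM : ∀ n, a + (ε n : ℂ) • 1 ∈ M := fun n =>
    add_mem haM (hsmul_mem _ _ (one_mem M))
  have hTbM : ∀ n, b + (ε n : ℂ) • 1 ∈ M := fun n =>
    add_mem hbM (hsmul_mem _ _ (one_mem M))
  have hvM : ∀ n, v n ∈ M := fun n => ml_mem_inv M (hTaM n) (hv1 n) (hv2 n)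
  have hwM : ∀ n, w n ∈ M := fun n => ml_mem_inv M (hTbM n) (hw1 n) (hw2 n)
  have hcomm : ∀ n, star x * v n = w n * star x := by
    intro n
    have hswap : star x * (a + (ε n : ℂ) • 1) = (b + (ε n : ℂ) • 1) * star x := by
      rw [ha, hb, mul_add, add_mul, ← mul_assoc, mul_smul_comm, mul_one, smul_mul_assoc,
        one_mul]
    calc star x * v n = (w n * (b + (ε n : ℂ) • 1)) * (star x * v n) := by
          rw [hw1 n, one_mul]
      _ = w n * (((b + (ε n : ℂ) • 1) * star x) * v n) := by
          rw [mul_assoc, ← mul_assoc (b + (ε n : ℂ) • 1)]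
      _ = w n * ((star x * (a + (ε n : ℂ) • 1)) * v n) := by rw [hswap]
      _ = w n * (star x * ((a + (ε n : ℂ) • 1) * v n)) := by rw [mul_assoc (star x)]
      _ = w n * star x := by rw [hv2 n, mul_one]
  have htr : ∀ n, τ.toFun (a * v n) = τ.toFun (b * w n) := by
    intro n
    have h1 : a * v n = x * (w n * star x) := by
      rw [ha, mul_assoc, hcomm n]
    have h2 : (w n * star x) * x = w n * b := by rw [mul_assoc, ← hb]
    rw [h1, τ.tracial x hx (w n * star x) (mul_mem (hwM n) (star_mem hx)), h2,
      τ.tracial (w n) (hwM n) b hbM]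
  have hreL : (LinearMap.range (a : H →ₗ[ℂ] H)).topologicalClosure = LinearMap.range (eL : H →ₗ[ℂ] H) := by
    rw [ha, ml_closure_range_mul_star, hL]
  have hreR : (LinearMap.range (b : H →ₗ[ℂ] H)).topologicalClosure = LinearMap.range (eR : H →ₗ[ℂ] H) := by
    rw [hb, show star x * x = star x * star (star x) by rw [star_star],
      ml_closure_range_mul_star, hR]
  have hnormL := τ.normal (fun n => a * v n) eL (fun n => mul_mem haM (hvM n)) hLM
    ⟨2, fun n => ml_norm_bound (hεpos n) (hv2 n) (hv3 n)⟩
    (fun ξ => ml_sot hasa hLsa hLid hreL hεpos hεlim hv1 hv2 hv3 ξ)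
  have hnormR := τ.normal (fun n => b * w n) eR (fun n => mul_mem hbM (hwM n)) hRM
    ⟨2, fun n => ml_norm_bound (hεpos n) (hw2 n) (hw3 n)⟩
    (fun ξ => ml_sot hbsa hRsa hRid hreR hεpos hεlim hw1 hw2 hw3 ξ)
  exact tendsto_nhds_unique hnormL (hnormR.congr (fun n => (htr n).symm))

end ModularAux2

/-- The modular law for projections in a tracial von Neumann algebra: if
`P ≤ R` then `(P ∨ Q) ∧ R = P ∨ (Q ∧ R)`.  Here `J = P ∨ Q`, `B = Q ∧ R`, `A` is the
projection with range `range J ∩ range R`, and `C` the projection with range the closure of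
`range P + range B`; the conclusion is `A = C`. -/
theorem stmt_5 {H : Type*} [NormedAddCommGroup H] [InnerProductSpace ℂ H] [CompleteSpace H]
    (M : VonNeumannAlgebra H) (τ : FaithfulNormalTracialState H M)
    (P Q R J B A C : H →L[ℂ] H) (hPM : P ∈ M) (hQM : Q ∈ M) (hRM : R ∈ M)
    (hP : IsSelfAdjoint P ∧ IsIdempotentElem P)
    (hQ : IsSelfAdjoint Q ∧ IsIdempotentElem Q)
    (hR : IsSelfAdjoint R ∧ IsIdempotentElem R)
    (hPR : LinearMap.range (P : H →ₗ[ℂ] H) ≤ LinearMap.range (R : H →ₗ[ℂ] H))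
    (hJ : IsSelfAdjoint J ∧ IsIdempotentElem J ∧
      LinearMap.range (J : H →ₗ[ℂ] H) = (LinearMap.range (P : H →ₗ[ℂ] H) ⊔ LinearMap.range (Q : H →ₗ[ℂ] H)).topologicalClosure)
    (hB : IsSelfAdjoint B ∧ IsIdempotentElem B ∧
      LinearMap.range (B : H →ₗ[ℂ] H) = LinearMap.range (Q : H →ₗ[ℂ] H) ⊓ LinearMap.range (R : H →ₗ[ℂ] H))
    (hA : IsSelfAdjoint A ∧ IsIdempotentElem A ∧
      LinearMap.range (A : H →ₗ[ℂ] H) = LinearMap.range (J : H →ₗ[ℂ] H) ⊓ LinearMap.range (R : H →ₗ[ℂ] H))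
    (hC : IsSelfAdjoint C ∧ IsIdempotentElem C ∧
      LinearMap.range (C : H →ₗ[ℂ] H) = (LinearMap.range (P : H →ₗ[ℂ] H) ⊔ LinearMap.range (B : H →ₗ[ℂ] H)).topologicalClosure) :
    A = C := by
  obtain ⟨hPsa, hPid⟩ := hP
  obtain ⟨hQsa, hQid⟩ := hQ
  obtain ⟨hRsa, hRid⟩ := hR
  obtain ⟨hJsa, hJid, hJr⟩ := hJ
  obtain ⟨hBsa, hBid, hBr⟩ := hB
  obtain ⟨hAsa, hAid, hAr⟩ := hA
  obtain ⟨hCsa, hCid, hCr⟩ := hC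
  have hJcl := ml_isClosed_range hJid
  have hRcl := ml_isClosed_range hRid
  have hCcl := ml_isClosed_range hCid
  -- range inclusions
  have hQJ : LinearMap.range (Q : H →ₗ[ℂ] H) ≤ LinearMap.range (J : H →ₗ[ℂ] H) := by
    rw [hJr]; exact le_trans le_sup_right (Submodule.le_topologicalClosure _)
  have hPJ : LinearMap.range (P : H →ₗ[ℂ] H) ≤ LinearMap.range (J : H →ₗ[ℂ] H) := by
    rw [hJr]; exact le_trans le_sup_left (Submodule.le_topologicalClosure _)
  have hBQ : LinearMap.range (B : H →ₗ[ℂ] H) ≤ LinearMap.range (Q : H →ₗ[ℂ] H) := by rw [hBr]; exact inf_le_left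
  have hBR : LinearMap.range (B : H →ₗ[ℂ] H) ≤ LinearMap.range (R : H →ₗ[ℂ] H) := by rw [hBr]; exact inf_le_right
  have hPC : LinearMap.range (P : H →ₗ[ℂ] H) ≤ LinearMap.range (C : H →ₗ[ℂ] H) := by
    rw [hCr]; exact le_trans le_sup_left (Submodule.le_topologicalClosure _)
  have hBC : LinearMap.range (B : H →ₗ[ℂ] H) ≤ LinearMap.range (C : H →ₗ[ℂ] H) := by
    rw [hCr]; exact le_trans le_sup_right (Submodule.le_topologicalClosure _)
  have hCR : LinearMap.range (C : H →ₗ[ℂ] H) ≤ LinearMap.range (R : H →ₗ[ℂ] H) := by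
    rw [hCr]; exact Submodule.topologicalClosure_minimal _ (sup_le hPR hBR) hRcl
  have hCJ : LinearMap.range (C : H →ₗ[ℂ] H) ≤ LinearMap.range (J : H →ₗ[ℂ] H) := by
    rw [hCr]
    exact Submodule.topologicalClosure_minimal _ (sup_le hPJ (le_trans hBQ hQJ)) hJcl
  have hCA : LinearMap.range (C : H →ₗ[ℂ] H) ≤ LinearMap.range (A : H →ₗ[ℂ] H) := by
    rw [hAr]; exact le_inf hCJ hCR
  have hAJ : LinearMap.range (A : H →ₗ[ℂ] H) ≤ LinearMap.range (J : H →ₗ[ℂ] H) := by rw [hAr]; exact inf_le_left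
  have hBQC : LinearMap.range (B : H →ₗ[ℂ] H) = LinearMap.range (Q : H →ₗ[ℂ] H) ⊓ LinearMap.range (C : H →ₗ[ℂ] H) := by
    apply le_antisymm (le_inf hBQ hBC)
    rw [hBr]
    exact le_inf inf_le_left (le_trans inf_le_right hCR)
  -- memberships via the double commutant
  have hJM : J ∈ M := by
    apply ml_mem_of_range M hJsa hJid
    intro T hT ξ
    have hmem : J ξ ∈ (LinearMap.range (P : H →ₗ[ℂ] H) ⊔ LinearMap.range (Q : H →ₗ[ℂ] H)).topologicalClosure := by
      rw [← hJr]; exact ⟨ξ, rfl⟩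
    apply ml_image_closure hJcl ?_ hmem
    intro k hk
    rw [Submodule.mem_sup] at hk
    obtain ⟨p, hp, q, hq, rfl⟩ := hk
    rw [map_add]
    apply add_mem
    · obtain ⟨ζ, rfl⟩ := hp
      rw [ContinuousLinearMap.coe_coe, ml_comm_apply hT hPM ζ]
      exact hPJ ⟨T ζ, rfl⟩
    · obtain ⟨ζ, rfl⟩ := hq
      rw [ContinuousLinearMap.coe_coe, ml_comm_apply hT hQM ζ]
      exact hQJ ⟨T ζ, rfl⟩
  have hBM : B ∈ M := by
    apply ml_mem_of_range M hBsa hBid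
    intro T hT ξ
    have hmem : B ξ ∈ LinearMap.range (Q : H →ₗ[ℂ] H) ⊓ LinearMap.range (R : H →ₗ[ℂ] H) := by
      rw [← hBr]; exact ⟨ξ, rfl⟩
    rw [Submodule.mem_inf] at hmem
    obtain ⟨⟨ζ, hζ⟩, ⟨η, hη⟩⟩ := hmem
    rw [hBr, Submodule.mem_inf]
    constructor
    · rw [← hζ, ContinuousLinearMap.coe_coe, ml_comm_apply hT hQM ζ]; exact ⟨T ζ, rfl⟩
    · rw [← hη, ContinuousLinearMap.coe_coe, ml_comm_apply hT hRM η]; exact ⟨T η, rfl⟩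
  have hAM : A ∈ M := by
    apply ml_mem_of_range M hAsa hAid
    intro T hT ξ
    have hmem : A ξ ∈ LinearMap.range (J : H →ₗ[ℂ] H) ⊓ LinearMap.range (R : H →ₗ[ℂ] H) := by
      rw [← hAr]; exact ⟨ξ, rfl⟩
    rw [Submodule.mem_inf] at hmem
    obtain ⟨⟨ζ, hζ⟩, ⟨η, hη⟩⟩ := hmem
    rw [hAr, Submodule.mem_inf]
    constructor
    · rw [← hζ, ContinuousLinearMap.coe_coe, ml_comm_apply hT hJM ζ]; exact ⟨T ζ, rfl⟩
    · rw [← hη, ContinuousLinearMap.coe_coe, ml_comm_apply hT hRM η]; exact ⟨T η, rfl⟩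
  have hCM : C ∈ M := by
    apply ml_mem_of_range M hCsa hCid
    intro T hT ξ
    have hmem : C ξ ∈ (LinearMap.range (P : H →ₗ[ℂ] H) ⊔ LinearMap.range (B : H →ₗ[ℂ] H)).topologicalClosure := by
      rw [← hCr]; exact ⟨ξ, rfl⟩
    apply ml_image_closure hCcl ?_ hmem
    intro k hk
    rw [Submodule.mem_sup] at hk
    obtain ⟨p, hp, q, hq, rfl⟩ := hk
    rw [map_add]
    apply add_mem
    · obtain ⟨ζ, rfl⟩ := hp
      rw [ContinuousLinearMap.coe_coe, ml_comm_apply hT hPM ζ]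
      exact hPC ⟨T ζ, rfl⟩
    · obtain ⟨ζ, rfl⟩ := hq
      rw [ContinuousLinearMap.coe_coe, ml_comm_apply hT hBM ζ]
      exact hBC ⟨T ζ, rfl⟩
  -- composition identities
  have hJQ : J * Q = Q := ml_comp hJid hQJ
  have hJC : J * C = C := ml_comp hJid hCJ
  have hCJ' : C * J = C := ml_comp_right hJsa hCsa hJid hCJ
  have hRP : R * P = P := ml_comp hRid hPR
  have hCP : C * P = P := ml_comp hCid hPC
  have hJCsa : IsSelfAdjoint (J - C) := hJsa.sub hCsa
  have hJCid : IsIdempotentElem (J - C) := ml_sub_idem hJid hCid hJC hCJ'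
  have h1M : (1 : H →L[ℂ] H) ∈ M := one_mem M
  have hx1M : (1 - C) * Q ∈ M := mul_mem (sub_mem h1M hCM) hQM
  have hx2M : (1 - R) * J ∈ M := mul_mem (sub_mem h1M hRM) hJM
  have hx3M : (1 - R) * Q ∈ M := mul_mem (sub_mem h1M hRM) hQM
  -- left support of (1-C)Q is J - C
  have hLC : (LinearMap.range (↑((1 - C) * Q) : H →ₗ[ℂ] H)).topologicalClosure = LinearMap.range (↑(J - C) : H →ₗ[ℂ] H) := by
    apply le_antisymm
    · apply Submodule.topologicalClosure_minimal
      · rintro _ ⟨ξ, rfl⟩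
        have hid2 : (J - C) * ((1 - C) * Q) = (1 - C) * Q := by
          have e1 : (J - C) * (1 - C) = J - C := by
            rw [mul_sub, mul_one, sub_mul, hJC, hCid.eq, sub_self, sub_zero]
          rw [← mul_assoc, e1, sub_mul, hJQ, sub_mul, one_mul]
        exact ⟨((1 - C) * Q) ξ, by simp only [ContinuousLinearMap.coe_coe]; rw [← ContinuousLinearMap.mul_apply, hid2]⟩
      · exact ml_isClosed_range hJCid
    · rintro _ ⟨ζ, rfl⟩
      have h3 : (J - C) ζ = (1 - C) (J ζ) := by
        simp only [ContinuousLinearMap.sub_apply, ContinuousLinearMap.one_apply]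
        rw [show C (J ζ) = (C * J) ζ from rfl, hCJ']
      have hJζ : J ζ ∈ (LinearMap.range (P : H →ₗ[ℂ] H) ⊔ LinearMap.range (Q : H →ₗ[ℂ] H)).topologicalClosure := by
        rw [← hJr]; exact ⟨ζ, rfl⟩
      rw [ContinuousLinearMap.coe_coe, h3]
      apply ml_image_closure (Submodule.isClosed_topologicalClosure _) ?_ hJζ
      intro k hk
      rw [Submodule.mem_sup] at hk
      obtain ⟨p, hp, q, hq, rfl⟩ := hk
      rw [map_add]
      apply add_mem
      · obtain ⟨η, rfl⟩ := hp
        have hz : (1 - C) (P η) = 0 := by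
          simp only [ContinuousLinearMap.sub_apply, ContinuousLinearMap.one_apply]
          rw [show C (P η) = (C * P) η from rfl, hCP, sub_self]
        rw [ContinuousLinearMap.coe_coe, hz]
        exact zero_mem _
      · obtain ⟨η, rfl⟩ := hq
        exact Submodule.le_topologicalClosure _ ⟨η, rfl⟩
  -- the closures of the ranges of (1-R)J and (1-R)Q coincide
  have hL23 : (LinearMap.range (↑((1 - R) * J) : H →ₗ[ℂ] H)).topologicalClosure
      = (LinearMap.range (↑((1 - R) * Q) : H →ₗ[ℂ] H)).topologicalClosure := by
    apply le_antisymm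
    · apply Submodule.topologicalClosure_minimal
      · rintro _ ⟨ζ, rfl⟩
        have h3 : ((1 - R) * J) ζ = (1 - R) (J ζ) := rfl
        have hJζ : J ζ ∈ (LinearMap.range (P : H →ₗ[ℂ] H) ⊔ LinearMap.range (Q : H →ₗ[ℂ] H)).topologicalClosure := by
          rw [← hJr]; exact ⟨ζ, rfl⟩
        rw [ContinuousLinearMap.coe_coe, h3]
        apply ml_image_closure (Submodule.isClosed_topologicalClosure _) ?_ hJζ
        intro k hk
        rw [Submodule.mem_sup] at hk
        obtain ⟨p, hp, q, hq, rfl⟩ := hk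
        rw [map_add]
        apply add_mem
        · obtain ⟨η, rfl⟩ := hp
          have hz : (1 - R) (P η) = 0 := by
            simp only [ContinuousLinearMap.sub_apply, ContinuousLinearMap.one_apply]
            rw [show R (P η) = (R * P) η from rfl, hRP, sub_self]
          rw [ContinuousLinearMap.coe_coe, hz]
          exact zero_mem _
        · obtain ⟨η, rfl⟩ := hq
          exact Submodule.le_topologicalClosure _ ⟨η, rfl⟩
      · exact Submodule.isClosed_topologicalClosure _
    · apply Submodule.topologicalClosure_minimal
      · have hcomp : ((1 - R) * J) * Q = (1 - R) * Q := by rw [mul_assoc, hJQ]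
        rintro _ ⟨ξ, rfl⟩
        apply Submodule.le_topologicalClosure
        exact ⟨Q ξ, by simp only [ContinuousLinearMap.coe_coe]; rw [show ((1 - R) * J) (Q ξ) = (((1 - R) * J) * Q) ξ from rfl, hcomp]⟩
      · exact Submodule.isClosed_topologicalClosure _
  -- the common left-support projection S
  obtain ⟨S, hSsa, hSid, hSr⟩ := ml_proj ((LinearMap.range (↑((1 - R) * J) : H →ₗ[ℂ] H)).topologicalClosure)
    (Submodule.isClosed_topologicalClosure _)
  have hSM : S ∈ M := by
    apply ml_mem_of_range M hSsa hSid
    intro T hT ξ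
    have hmem : S ξ ∈ (LinearMap.range (↑((1 - R) * J) : H →ₗ[ℂ] H)).topologicalClosure := by
      rw [← hSr]; exact ⟨ξ, rfl⟩
    rw [hSr]
    apply ml_image_closure (Submodule.isClosed_topologicalClosure _) ?_ hmem
    intro k hk
    obtain ⟨ζ, rfl⟩ := hk
    rw [ContinuousLinearMap.coe_coe, ml_comm_apply hT hx2M ζ]
    exact Submodule.le_topologicalClosure _ ⟨T ζ, rfl⟩
  -- star identities
  have hstar1 : star ((1 - C) * Q) = Q * (1 - C) := by
    rw [star_mul, star_sub, star_one, hQsa.star_eq, hCsa.star_eq]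
  have hstar2 : star ((1 - R) * J) = J * (1 - R) := by
    rw [star_mul, star_sub, star_one, hJsa.star_eq, hRsa.star_eq]
  have hstar3 : star ((1 - R) * Q) = Q * (1 - R) := by
    rw [star_mul, star_sub, star_one, hQsa.star_eq, hRsa.star_eq]
  -- right supports
  have hRS1 : (LinearMap.range (↑(star ((1 - C) * Q)) : H →ₗ[ℂ] H)).topologicalClosure
      = LinearMap.range (↑(Q - B) : H →ₗ[ℂ] H) := by
    rw [hstar1]
    exact ml_right_support hQsa hQid hCsa hCid hBsa hBid hBQC
  have hRS2 : (LinearMap.range (↑(star ((1 - R) * J)) : H →ₗ[ℂ] H)).topologicalClosure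
      = LinearMap.range (↑(J - A) : H →ₗ[ℂ] H) := by
    rw [hstar2]
    exact ml_right_support hJsa hJid hRsa hRid hAsa hAid hAr
  have hRS3 : (LinearMap.range (↑(star ((1 - R) * Q)) : H →ₗ[ℂ] H)).topologicalClosure
      = LinearMap.range (↑(Q - B) : H →ₗ[ℂ] H) := by
    rw [hstar3]
    exact ml_right_support hQsa hQid hRsa hRid hBsa hBid hBr
  -- projections Q - B and J - A
  have hQB : Q * B = B := ml_comp hQid hBQ
  have hBQ' : B * Q = B := ml_comp_right hQsa hBsa hQid hBQ
  have hQBsa : IsSelfAdjoint (Q - B) := hQsa.sub hBsa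
  have hQBid : IsIdempotentElem (Q - B) := ml_sub_idem hQid hBid hQB hBQ'
  have hJA : J * A = A := ml_comp hJid hAJ
  have hAJ' : A * J = A := ml_comp_right hJsa hAsa hJid hAJ
  have hJAsa : IsSelfAdjoint (J - A) := hJsa.sub hAsa
  have hJAid : IsIdempotentElem (J - A) := ml_sub_idem hJid hAid hJA hAJ'
  have hQBM : Q - B ∈ M := sub_mem hQM hBM
  have hJAM : J - A ∈ M := sub_mem hJM hAM
  have hJCM : J - C ∈ M := sub_mem hJM hCM
  -- the three trace identities
  have t1 : τ.toFun (J - C) = τ.toFun (Q - B) :=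
    ml_trace_eq M τ hx1M hJCM hQBM hJCsa hJCid hQBsa hQBid hLC hRS1
  have t2 : τ.toFun S = τ.toFun (J - A) :=
    ml_trace_eq M τ hx2M hSM hJAM hSsa hSid hJAsa hJAid hSr.symm hRS2
  have t3 : τ.toFun S = τ.toFun (Q - B) :=
    ml_trace_eq M τ hx3M hSM hQBM hSsa hSid hQBsa hQBid (by rw [← hL23]; exact hSr.symm) hRS3
  have tAC : τ.toFun A = τ.toFun C := by
    have e1 : τ.toFun (J - A) = τ.toFun (J - C) := by rw [← t2, t3, ← t1]
    rw [map_sub, map_sub] at e1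
    linear_combination -e1
  -- A - C is a projection in M with trace zero, hence zero
  have hACm : A * C = C := ml_comp hAid hCA
  have hCAm : C * A = C := ml_comp_right hAsa hCsa hAid hCA
  have hD : star (A - C) * (A - C) = A - C := by
    rw [star_sub, hAsa.star_eq, hCsa.star_eq, sub_mul, mul_sub, mul_sub, hAid.eq, hCid.eq,
      hACm, hCAm]
    abel
  have hDt : τ.toFun (star (A - C) * (A - C)) = 0 := by
    rw [hD, map_sub, tAC, sub_self]
  have hfin := τ.faithful (A - C) (sub_mem hAM hCM) hDt
  exact sub_eq_zero.mp hfin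
end

section
/- There exist closed subspaces E, F, G of a separable infinite-dimensional Hilbert space H such that E ⊆ G, F ∩ G = {0}, but the closure of (E + F) intersected with G is not equal to E. -/
/-!
If `E ⊓ F = ⊥` but `E ⊔ F` is not closed, pick `g ∈ closure (E ⊔ F) \ (E ⊔ F)` and let
`G = E ⊔ 𝕜 ∙ g`, which is closed. Then `F ⊓ G = ⊥`, while `g ∈ closure (E ⊔ F) ⊓ G` but `g ∉ E`.

Such a pair exists in every infinite-dimensional Hilbert space. For orthonormal `aₙ, bₙ` and
`sₙ > 0` summable, let `E` be the closed span of the `aₙ` and `F` the closed subspace of vectors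
`y` with `⟪bₙ, y⟫ = sₙ² ⟪aₙ, y⟫`. Then `E ⊓ F = ⊥` and every `bₙ` lies in `E ⊔ F`, but
`∑ sₙ bₙ ∉ E ⊔ F`: for `z ∈ E ⊔ F` the defect `⟪bₙ, z⟫ - sₙ² ⟪aₙ, z⟫` is `O(sₙ²)`, while for
`z = ∑ sₙ bₙ` it equals `sₙ`.
-/

open Submodule Set
open scoped InnerProductSpace

theorem Submodule.inf_sup_span_singleton_eq_bot {K V : Type*} [DivisionRing K] [AddCommGroup V]
    [Module K V] {E F : Submodule K V} {g : V} (hEF : E ⊓ F = ⊥) (hg : g ∉ E ⊔ F) :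
    F ⊓ (E ⊔ K ∙ g) = ⊥ := by
  rw [eq_bot_iff]
  rintro _ ⟨hxF, hxG⟩
  obtain ⟨y, hy, z, hz, rfl⟩ := mem_sup.1 hxG
  obtain ⟨c, rfl⟩ := mem_span_singleton.1 hz
  obtain rfl : c = 0 := by
    by_contra hc
    refine hg ?_
    have hcg : c • g ∈ E ⊔ F := by
      simpa using sub_mem (mem_sup_right hxF) (mem_sup_left hy : y ∈ E ⊔ F)
    simpa [hc] using smul_mem _ c⁻¹ hcg
  rw [zero_smul, add_zero] at hxF ⊢
  exact hEF ▸ mem_inf.2 ⟨hy, hxF⟩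

theorem Submodule.exists_closure_sup_inf_ne_of_not_isClosed_sup {𝕜 V : Type*}
    [NontriviallyNormedField 𝕜] [CompleteSpace 𝕜] [AddCommGroup V] [TopologicalSpace V]
    [IsTopologicalAddGroup V] [Module 𝕜 V] [ContinuousSMul 𝕜 V] {E F : Submodule 𝕜 V}
    (hE : IsClosed (E : Set V)) (hEF : E ⊓ F = ⊥)
    (hsup : ¬ IsClosed ((E ⊔ F : Submodule 𝕜 V) : Set V)) :
    ∃ G : Submodule 𝕜 V, IsClosed (G : Set V) ∧ E ≤ G ∧ F ⊓ G = ⊥ ∧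
      (E ⊔ F).topologicalClosure ⊓ G ≠ E := by
  obtain ⟨g, hg_cl, hg⟩ := not_subset.1 (mt isClosed_of_closure_subset hsup)
  refine ⟨E ⊔ 𝕜 ∙ g, E.isClosed_sup_finiteDimensional _ hE, le_sup_left,
    inf_sup_span_singleton_eq_bot hEF hg, fun h => hg (mem_sup_left ?_)⟩
  rw [← h]
  exact mem_inf.2 ⟨hg_cl, mem_sup_right (mem_span_singleton_self g)⟩

section InnerProductSpace

variable {𝕜 H : Type*} [RCLike 𝕜] [NormedAddCommGroup H] [InnerProductSpace 𝕜 H]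

theorem exists_orthonormal_nat [CompleteSpace H] (h : ¬ FiniteDimensional 𝕜 H) :
    ∃ e : ℕ → H, Orthonormal 𝕜 e := by
  obtain ⟨w, b, -⟩ := exists_hilbertBasis 𝕜 H
  cases finite_or_infinite w with
  | inl hw =>
    have := Fintype.ofFinite w
    exact absurd (Module.Finite.of_basis b.toOrthonormalBasis.toBasis) h
  | inr hw =>
    exact ⟨b ∘ Infinite.natEmbedding w, b.orthonormal.comp _ (Infinite.natEmbedding w).injective⟩

theorem Submodule.mem_orthogonal_span_range_iff {ι : Type*} {f : ι → H} {y : H} :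
    y ∈ (span 𝕜 (range f))ᗮ ↔ ∀ i, ⟪f i, y⟫_𝕜 = 0 := by
  refine ⟨fun h i => inner_right_of_mem_orthogonal (subset_span (mem_range_self i)) h, fun h => ?_⟩
  have hspan : span 𝕜 (range f) ≤ (𝕜 ∙ y)ᗮ :=
    span_le.2 <| range_subset_iff.2 fun i => mem_orthogonal_singleton_iff_inner_left.2 (h i)
  exact fun u hu => mem_orthogonal_singleton_iff_inner_left.1 (hspan hu)

/-- For orthonormal `a`, `b`: the graph of the diagonal operator `a n ↦ t n • b n`, plus all
vectors orthogonal to every `a n` and `b n`. -/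
def diagonalGraph (𝕜 : Type*) [RCLike 𝕜] [InnerProductSpace 𝕜 H] (a b : ℕ → H) (t : ℕ → ℝ) :
    Submodule 𝕜 H :=
  ⨅ n, (𝕜 ∙ (b n - (t n : 𝕜) • a n))ᗮ

theorem mem_diagonalGraph_iff {a b : ℕ → H} {t : ℕ → ℝ} {y : H} :
    y ∈ diagonalGraph 𝕜 a b t ↔ ∀ n, ⟪b n, y⟫_𝕜 = t n * ⟪a n, y⟫_𝕜 := by
  simp only [diagonalGraph, Submodule.mem_iInf, mem_orthogonal_singleton_iff_inner_right,
    inner_sub_left, inner_smul_real_left, RCLike.real_smul_eq_coe_mul, sub_eq_zero]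

theorem isClosed_diagonalGraph (a b : ℕ → H) (t : ℕ → ℝ) :
    IsClosed (diagonalGraph 𝕜 a b t : Set H) := by
  rw [diagonalGraph, iInf_orthogonal]
  exact isClosed_orthogonal _

section Diagonal

variable {a b : ℕ → H} {t : ℕ → ℝ}

theorem inner_eq_zero_of_mem_closure_span (hab : ∀ m n, ⟪a m, b n⟫_𝕜 = 0) {x : H}
    (hx : x ∈ (span 𝕜 (range a)).topologicalClosure) (n : ℕ) : ⟪b n, x⟫_𝕜 = 0 := by
  have hb : b n ∈ (span 𝕜 (range a)).topologicalClosureᗮ := by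
    rw [orthogonal_closure, mem_orthogonal_span_range_iff]
    exact fun m => hab m n
  exact inner_left_of_mem_orthogonal hx hb

theorem closure_span_inf_diagonalGraph_eq_bot (hab : ∀ m n, ⟪a m, b n⟫_𝕜 = 0)
    (ht : ∀ n, t n ≠ 0) : (span 𝕜 (range a)).topologicalClosure ⊓ diagonalGraph 𝕜 a b t = ⊥ := by
  rw [eq_bot_iff]
  rintro y ⟨hyE, hyF⟩
  have hy_perp : y ∈ (span 𝕜 (range a)).topologicalClosureᗮ := by
    rw [orthogonal_closure, mem_orthogonal_span_range_iff]
    intro n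
    have h := mem_diagonalGraph_iff.1 hyF n
    rw [inner_eq_zero_of_mem_closure_span hab hyE n, eq_comm, mul_eq_zero] at h
    exact h.resolve_left (RCLike.ofReal_ne_zero.2 (ht n))
  exact (inf_orthogonal_eq_bot _).le (mem_inf.2 ⟨hyE, hy_perp⟩)

theorem mem_closure_span_sup_diagonalGraph (ha : Orthonormal 𝕜 a) (hb : Orthonormal 𝕜 b)
    (hab : ∀ m n, ⟪a m, b n⟫_𝕜 = 0) (ht : ∀ n, t n ≠ 0) (n : ℕ) :
    b n ∈ (span 𝕜 (range a)).topologicalClosure ⊔ diagonalGraph 𝕜 a b t := by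
  have hgraph : a n + (t n : 𝕜) • b n ∈ diagonalGraph 𝕜 a b t := by
    rw [mem_diagonalGraph_iff]
    intro m
    rw [inner_add_right, inner_add_right, inner_smul_right, inner_smul_right,
      inner_eq_zero_symm.1 (hab n m), hab m n, orthonormal_iff_ite.1 ha,
      orthonormal_iff_ite.1 hb]
    split_ifs with h <;> simp [h]
  have ha_mem : a n ∈ (span 𝕜 (range a)).topologicalClosure :=
    le_topologicalClosure _ (subset_span (mem_range_self n))
  have hbn : b n = (t n : 𝕜)⁻¹ • ((a n + (t n : 𝕜) • b n) - a n) := by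
    rw [add_sub_cancel_left, inv_smul_smul₀ (RCLike.ofReal_ne_zero.2 (ht n))]
  rw [hbn]
  exact smul_mem _ _ (sub_mem (mem_sup_right hgraph) (mem_sup_left ha_mem))

theorem exists_bound_of_mem_closure_span_sup_diagonalGraph (ha : Orthonormal 𝕜 a)
    (hab : ∀ m n, ⟪a m, b n⟫_𝕜 = 0) {z : H}
    (hz : z ∈ (span 𝕜 (range a)).topologicalClosure ⊔ diagonalGraph 𝕜 a b t) :
    ∃ C, ∀ n, ‖⟪b n, z⟫_𝕜 - t n * ⟪a n, z⟫_𝕜‖ ≤ C * |t n| := by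
  obtain ⟨x, hx, y, hy, rfl⟩ := mem_sup.1 hz
  refine ⟨‖x‖, fun n => ?_⟩
  have hdefect : ⟪b n, x + y⟫_𝕜 - t n * ⟪a n, x + y⟫_𝕜 = -(t n * ⟪a n, x⟫_𝕜) := by
    rw [inner_add_right, inner_add_right, inner_eq_zero_of_mem_closure_span hab hx n,
      mem_diagonalGraph_iff.1 hy n]
    ring
  calc ‖⟪b n, x + y⟫_𝕜 - t n * ⟪a n, x + y⟫_𝕜‖ = |t n| * ‖⟪a n, x⟫_𝕜‖ := by
        rw [hdefect, norm_neg, norm_mul, RCLike.norm_ofReal]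
    _ ≤ |t n| * (‖a n‖ * ‖x‖) := by gcongr; exact norm_inner_le_norm _ _
    _ = ‖x‖ * |t n| := by rw [ha.1 n, one_mul, mul_comm]

theorem tsum_smul_not_mem_closure_span_sup_diagonalGraph [CompleteSpace H]
    (ha : Orthonormal 𝕜 a) (hb : Orthonormal 𝕜 b) (hab : ∀ m n, ⟪a m, b n⟫_𝕜 = 0)
    {s : ℕ → ℝ} (hs_pos : ∀ n, 0 < s n) (hs : Summable s) :
    ∑' n, (s n : 𝕜) • b n ∉
      (span 𝕜 (range a)).topologicalClosure ⊔ diagonalGraph 𝕜 a b (fun n => s n ^ 2) := by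
  intro hmem
  have hsum : Summable fun n => (s n : 𝕜) • b n :=
    Summable.of_norm (by simpa [norm_smul, hb.1, abs_of_pos (hs_pos _)] using hs)
  have hinner (x : H) : ⟪x, ∑' n, (s n : 𝕜) • b n⟫_𝕜 = ∑' n, s n * ⟪x, b n⟫_𝕜 := by
    simpa [inner_smul_right] using (innerSL 𝕜 x).map_tsum hsum
  obtain ⟨C, hC⟩ := exists_bound_of_mem_closure_span_sup_diagonalGraph ha hab hmem
  have hCs (n : ℕ) : 1 ≤ C * s n := by
    have h := hC n
    simp only [hinner, orthonormal_iff_ite.1 hb, hab, mul_ite, mul_one, mul_zero, tsum_ite_eq',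
      tsum_zero, sub_zero, RCLike.norm_ofReal, abs_of_pos (hs_pos n), abs_pow] at h
    nlinarith [hs_pos n]
  obtain ⟨n, hn⟩ :=
    ((hs.tendsto_atTop_zero.const_mul C).eventually (gt_mem_nhds (by simp : C * 0 < 1))).exists
  exact not_lt.2 (hCs n) hn

end Diagonal

theorem exists_isClosed_inf_eq_bot_not_isClosed_sup [CompleteSpace H] {e : ℕ → H}
    (he : Orthonormal 𝕜 e) :
    ∃ E F : Submodule 𝕜 H, IsClosed (E : Set H) ∧ IsClosed (F : Set H) ∧ E ⊓ F = ⊥ ∧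
      ¬ IsClosed ((E ⊔ F : Submodule 𝕜 H) : Set H) := by
  set a : ℕ → H := fun n => e (2 * n)
  set b : ℕ → H := fun n => e (2 * n + 1)
  have ha : Orthonormal 𝕜 a := he.comp _ fun m n h => by omega
  have hb : Orthonormal 𝕜 b := he.comp _ fun m n h => by omega
  have hab (m n : ℕ) : ⟪a m, b n⟫_𝕜 = 0 := he.2 (by omega)
  set s : ℕ → ℝ := fun n => (1 / 2) ^ n
  have hs_pos (n : ℕ) : 0 < s n := by positivity
  refine ⟨_, diagonalGraph 𝕜 a b (fun n => s n ^ 2), isClosed_topologicalClosure _,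
    isClosed_diagonalGraph _ _ _, closure_span_inf_diagonalGraph_eq_bot hab fun n => by positivity,
    fun hclosed => tsum_smul_not_mem_closure_span_sup_diagonalGraph ha hb hab hs_pos
      summable_geometric_two (tsum_mem hclosed fun n => smul_mem _ _ ?_)⟩
  exact mem_closure_span_sup_diagonalGraph ha hb hab (fun n => by positivity) n

end InnerProductSpace

theorem stmt_6_general {H : Type*} [NormedAddCommGroup H] [InnerProductSpace ℂ H] [CompleteSpace H]
    (hinf : ¬ FiniteDimensional ℂ H) :
    ∃ E F G : Submodule ℂ H,
      IsClosed (E : Set H) ∧ IsClosed (F : Set H) ∧ IsClosed (G : Set H) ∧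
      E ≤ G ∧ F ⊓ G = ⊥ ∧ (E ⊔ F).topologicalClosure ⊓ G ≠ E := by
  obtain ⟨e, he⟩ := exists_orthonormal_nat hinf
  obtain ⟨E, F, hE, hF, hEF, hsup⟩ := exists_isClosed_inf_eq_bot_not_isClosed_sup he
  obtain ⟨G, hG, hEG, hFG, hne⟩ := exists_closure_sup_inf_ne_of_not_isClosed_sup hE hEF hsup
  exact ⟨E, F, G, hE, hF, hG, hEG, hFG, hne⟩

/-- In any separable infinite-dimensional complex Hilbert space there exist
closed subspaces `E ⊆ G` and `F` with `F ∩ G = {0}` but `closure(E + F) ∩ G ≠ E`. -/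
theorem stmt_6 {H : Type*} [NormedAddCommGroup H] [InnerProductSpace ℂ H] [CompleteSpace H]
    [TopologicalSpace.SeparableSpace H] (hinf : ¬ FiniteDimensional ℂ H) :
    ∃ E F G : Submodule ℂ H,
      IsClosed (E : Set H) ∧ IsClosed (F : Set H) ∧ IsClosed (G : Set H) ∧
      E ≤ G ∧ F ⊓ G = ⊥ ∧ (E ⊔ F).topologicalClosure ⊓ G ≠ E :=
  stmt_6_general hinf
end

section
/- Let H be a separable infinite-dimensional Hilbert space with orthonormal basis (e_n)_{n≥1}. Let P_n be the orthogonal projection onto the orthogonal complement of e_n, and Q_n the orthogonal projection onto the orthogonal complement of (1/n)e_1 + e_n. Then P_n → 1 and Q_n → 1 in the strong operator topology, but P_n ∧ Q_n converges in the strong operator topology to the projection onto the orthogonal complement of e_1, not to 1. -/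
open Filter Topology

local notation "⟪" x ", " y "⟫" => @inner ℂ _ _ x y

/-- A self-adjoint idempotent agrees with the value `u` whenever `u` lies in its range and
`ξ - u` is orthogonal to the range. -/
private lemma keyT {H : Type*} [NormedAddCommGroup H] [InnerProductSpace ℂ H] [CompleteSpace H]
    {T : H →L[ℂ] H} (hsa : IsSelfAdjoint T) (hid : IsIdempotentElem T)
    {ξ u : H} (hu : u ∈ LinearMap.range (T : H →ₗ[ℂ] H)) (hd : ξ - u ∈ (LinearMap.range (T : H →ₗ[ℂ] H))ᗮ) :
    T ξ = u := by
  obtain ⟨w, hw⟩ := hu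
  have hTu : T u = u := by
    have h := congrArg (fun S : H →L[ℂ] H => S w) hid
    have hw' : T w = u := hw
    simpa [ContinuousLinearMap.mul_apply, hw'] using h
  have hTd : T (ξ - u) = 0 := by
    have h0 : ⟪T (ξ - u), T (ξ - u)⟫ = 0 := by
      have hadj : ContinuousLinearMap.adjoint T = T := hsa.adjoint_eq
      have h1 := ContinuousLinearMap.adjoint_inner_left T (T (ξ - u)) (ξ - u)
      rw [hadj] at h1
      rw [h1]
      exact (Submodule.mem_orthogonal' _ _).mp hd _ ⟨T (ξ - u), rfl⟩
    exact inner_self_eq_zero.mp h0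
  have h2 : T ξ - u = 0 := by rw [← hTu, ← map_sub, hTd]
  exact sub_eq_zero.mp h2

/-- The coefficients of a vector along a Hilbert basis tend to zero. -/
private lemma coefT {H : Type*} [NormedAddCommGroup H] [InnerProductSpace ℂ H] [CompleteSpace H]
    (b : HilbertBasis ℕ ℂ H) (ξ : H) :
    Tendsto (fun n => ‖⟪b n, ξ⟫‖) atTop (𝓝 0) := by
  have hs := b.summable_inner_mul_inner ξ ξ
  have h0 := hs.tendsto_atTop_zero
  have h1 : Tendsto (fun n => ‖⟪ξ, b n⟫ * ⟪b n, ξ⟫‖) atTop (𝓝 0) := by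
    simpa using h0.norm
  have h2 : ∀ n, ‖⟪ξ, b n⟫ * ⟪b n, ξ⟫‖ = ‖⟪b n, ξ⟫‖ ^ 2 := by
    intro n
    rw [norm_mul, ← inner_conj_symm (b n) ξ, RCLike.norm_conj]
    ring
  have h3 : Tendsto (fun n => ‖⟪b n, ξ⟫‖ ^ 2) atTop (𝓝 0) := by
    exact h1.congr h2
  have h4 : Tendsto (fun n => Real.sqrt (‖⟪b n, ξ⟫‖ ^ 2)) atTop (𝓝 0) := by
    simpa using h3.sqrt
  simpa [Real.sqrt_sq (norm_nonneg _)] using h4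

/-- With an orthonormal basis `(eₙ)_{n≥1}` of a separable Hilbert space, let
`Pₙ` be the projection onto `eₙ^⊥` and `Qₙ` the projection onto `((1/n)e₁ + eₙ)^⊥`.  Then
`Pₙ → 1` and `Qₙ → 1` strongly, but `Pₙ ∧ Qₙ` converges strongly to the projection `E₁`
onto `e₁^⊥`, which is not `1`. -/
theorem stmt_7 {H : Type*} [NormedAddCommGroup H] [InnerProductSpace ℂ H] [CompleteSpace H]
    (b : HilbertBasis ℕ ℂ H) (P Q R : ℕ → H →L[ℂ] H) (E1 : H →L[ℂ] H)
    (hP : ∀ n, 1 ≤ n → IsSelfAdjoint (P n) ∧ IsIdempotentElem (P n) ∧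
      LinearMap.range (P n : H →ₗ[ℂ] H) = (ℂ ∙ (b n))ᗮ)
    (hQ : ∀ n, 1 ≤ n → IsSelfAdjoint (Q n) ∧ IsIdempotentElem (Q n) ∧
      LinearMap.range (Q n : H →ₗ[ℂ] H) = (ℂ ∙ ((1 / (n : ℂ)) • b 1 + b n))ᗮ)
    (hR : ∀ n, 1 ≤ n → IsSelfAdjoint (R n) ∧ IsIdempotentElem (R n) ∧
      LinearMap.range (R n : H →ₗ[ℂ] H) = LinearMap.range (P n : H →ₗ[ℂ] H) ⊓ LinearMap.range (Q n : H →ₗ[ℂ] H))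
    (hE1 : IsSelfAdjoint E1 ∧ IsIdempotentElem E1 ∧ LinearMap.range (E1 : H →ₗ[ℂ] H) = (ℂ ∙ (b 1))ᗮ) :
    (∀ ξ : H, Tendsto (fun n => P n ξ) atTop (𝓝 ξ)) ∧
    (∀ ξ : H, Tendsto (fun n => Q n ξ) atTop (𝓝 ξ)) ∧
    (∀ ξ : H, Tendsto (fun n => R n ξ) atTop (𝓝 (E1 ξ))) ∧
    E1 ≠ 1 := by
  have hon := b.orthonormal
  have hite : ∀ i j : ℕ, ⟪b i, b j⟫ = if i = j then 1 else 0 := orthonormal_iff_ite.mp hon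
  have hbb : ∀ i : ℕ, ⟪b i, b i⟫ = 1 := fun i => by rw [hite]; simp
  have hnorm1 : ∀ i : ℕ, ‖b i‖ = 1 := hon.1
  -- The vector defining Q n
  set v : ℕ → H := fun n => (1 / (n : ℂ)) • b 1 + b n with hv
  -- generic computation for projection onto complement of a unit vector
  have projCompl : ∀ (e : H), ⟪e, e⟫ = 1 → ∀ {T : H →L[ℂ] H}, IsSelfAdjoint T →
      IsIdempotentElem T → LinearMap.range (T : H →ₗ[ℂ] H) = (ℂ ∙ e)ᗮ → ∀ ξ : H,
      T ξ = ξ - ⟪e, ξ⟫ • e := by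
    intro e he T hsa hid hr ξ
    apply keyT hsa hid
    · rw [hr, Submodule.mem_orthogonal_singleton_iff_inner_right]
      rw [inner_sub_right, inner_smul_right, he]
      simp
    · rw [hr]
      have hsub : ξ - (ξ - ⟪e, ξ⟫ • e) = ⟪e, ξ⟫ • e := by abel
      rw [hsub]
      exact Submodule.le_orthogonal_orthogonal _
        (Submodule.smul_mem _ _ (Submodule.mem_span_singleton_self e))
  -- coefficient convergence
  have hcoef := coefT b
  -- ============ P ============
  have hPconv : ∀ ξ : H, Tendsto (fun n => P n ξ) atTop (𝓝 ξ) := by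
    intro ξ
    rw [tendsto_iff_norm_sub_tendsto_zero]
    apply squeeze_zero' (Eventually.of_forall fun n => norm_nonneg _)
      (g := fun n => ‖⟪b n, ξ⟫‖) _ (hcoef ξ)
    filter_upwards [eventually_ge_atTop 1] with n hn
    obtain ⟨hsa, hid, hr⟩ := hP n hn
    rw [projCompl (b n) (hbb n) hsa hid hr ξ]
    simp [norm_smul, hnorm1]
  -- ============ Q ============
  have hQconv : ∀ ξ : H, Tendsto (fun n => Q n ξ) atTop (𝓝 ξ) := by
    intro ξ
    rw [tendsto_iff_norm_sub_tendsto_zero]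
    have hg : Tendsto (fun n : ℕ => (1 / (n : ℝ)) * ‖⟪b 1, ξ⟫‖ + ‖⟪b n, ξ⟫‖) atTop (𝓝 0) := by
      have h1 : Tendsto (fun n : ℕ => (1 / (n : ℝ)) * ‖⟪b 1, ξ⟫‖) atTop (𝓝 0) := by
        simpa using (tendsto_one_div_atTop_nhds_zero_nat).mul_const ‖⟪b 1, ξ⟫‖
      simpa using h1.add (hcoef ξ)
    apply squeeze_zero' (Eventually.of_forall fun n => norm_nonneg _) _ hg
    filter_upwards [eventually_ge_atTop 2] with n hn
    have hn1 : 1 ≤ n := le_trans one_le_two hn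
    have hne : n ≠ 1 := by omega
    obtain ⟨hsa, hid, hr⟩ := hQ n hn1
    -- basic facts about v n
    have hbv : ⟪b n, v n⟫ = 1 := by
      simp [hv, inner_add_right, inner_smul_right, hite, hne, hbb, hnorm1]
    have hvnorm : 1 ≤ ‖v n‖ := by
      have := norm_inner_le_norm (𝕜 := ℂ) (b n) (v n)
      rw [hbv] at this
      simpa [hnorm1] using this
    have hvne : ⟪v n, v n⟫ ≠ 0 := by
      intro h
      have : v n = 0 := inner_self_eq_zero.mp h
      rw [this, norm_zero] at hvnorm
      linarith
    set c : ℂ := ⟪v n, ξ⟫ / ⟪v n, v n⟫ with hc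
    have hQval : Q n ξ = ξ - c • v n := by
      apply keyT hsa hid
      · rw [hr, Submodule.mem_orthogonal_singleton_iff_inner_right]
        rw [inner_sub_right, inner_smul_right, hc]
        field_simp
        simp only [hv]
        ring
      · rw [hr]
        have hsub : ξ - (ξ - c • v n) = c • v n := by abel
        rw [hsub]
        exact Submodule.le_orthogonal_orthogonal _
          (Submodule.smul_mem _ _ (Submodule.mem_span_singleton_self _))
    rw [hQval]
    have hsub2 : ξ - c • v n - ξ = -(c • v n) := by abel
    rw [hsub2, norm_neg, norm_smul]
    have hcc : ‖⟪v n, v n⟫‖ = ‖v n‖ ^ 2 := by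
      rw [inner_self_eq_norm_sq_to_K]
      simp
    have hstep1 : ‖c‖ * ‖v n‖ ≤ ‖⟪v n, ξ⟫‖ := by
      rw [hc, norm_div, hcc]
      have hvpos : 0 < ‖v n‖ := lt_of_lt_of_le one_pos hvnorm
      rw [div_mul_eq_mul_div, pow_two, mul_div_assoc]
      calc ‖⟪v n, ξ⟫‖ * (‖v n‖ / (‖v n‖ * ‖v n‖)) = ‖⟪v n, ξ⟫‖ / ‖v n‖ := by
            field_simp
        _ ≤ ‖⟪v n, ξ⟫‖ / 1 := by
            apply div_le_div_of_nonneg_left (norm_nonneg _) one_pos hvnorm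
        _ = ‖⟪v n, ξ⟫‖ := by rw [div_one]
    refine le_trans hstep1 ?_
    have hvxi : ⟪v n, ξ⟫ = (starRingEnd ℂ) (1 / (n : ℂ)) * ⟪b 1, ξ⟫ + ⟪b n, ξ⟫ := by
      rw [hv]
      simp [inner_add_left, inner_smul_left]
      ring
    rw [hvxi]
    calc ‖(starRingEnd ℂ) (1 / (n : ℂ)) * ⟪b 1, ξ⟫ + ⟪b n, ξ⟫‖
        ≤ ‖(starRingEnd ℂ) (1 / (n : ℂ)) * ⟪b 1, ξ⟫‖ + ‖⟪b n, ξ⟫‖ := norm_add_le _ _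
      _ = (1 / (n : ℝ)) * ‖⟪b 1, ξ⟫‖ + ‖⟪b n, ξ⟫‖ := by
          rw [norm_mul, RCLike.norm_conj]
          norm_num
  -- ============ R ============
  have hRconv : ∀ ξ : H, Tendsto (fun n => R n ξ) atTop (𝓝 (E1 ξ)) := by
    intro ξ
    have hE1val : E1 ξ = ξ - ⟪b 1, ξ⟫ • b 1 :=
      projCompl (b 1) (hbb 1) hE1.1 hE1.2.1 hE1.2.2 ξ
    rw [tendsto_iff_norm_sub_tendsto_zero]
    apply squeeze_zero' (Eventually.of_forall fun n => norm_nonneg _)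
      (g := fun n => ‖⟪b n, ξ⟫‖) _ (hcoef ξ)
    filter_upwards [eventually_ge_atTop 2] with n hn
    have hn1 : 1 ≤ n := le_trans one_le_two hn
    have hne : n ≠ 1 := by omega
    have hne' : (1 : ℕ) ≠ n := fun h => hne h.symm
    obtain ⟨hsa, hid, hr⟩ := hR n hn1
    have hrange : LinearMap.range (R n : H →ₗ[ℂ] H) = (ℂ ∙ (b n))ᗮ ⊓ (ℂ ∙ (v n))ᗮ := by
      rw [hr, (hP n hn1).2.2, (hQ n hn1).2.2]
    have hRval : R n ξ = ξ - ⟪b 1, ξ⟫ • b 1 - ⟪b n, ξ⟫ • b n := by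
      apply keyT hsa hid
      · rw [hrange, Submodule.mem_inf]
        constructor
        · rw [Submodule.mem_orthogonal_singleton_iff_inner_right]
          simp [inner_sub_right, inner_smul_right, hite, hne, hne', hnorm1]
        · rw [Submodule.mem_orthogonal_singleton_iff_inner_right]
          rw [hv]
          simp only [inner_add_left, inner_sub_right, inner_smul_right, inner_smul_left]
          simp [hite, hne, hne', hnorm1]
          ring
      · rw [hrange]
        have hsub : ξ - (ξ - ⟪b 1, ξ⟫ • b 1 - ⟪b n, ξ⟫ • b n)
            = ⟪b 1, ξ⟫ • b 1 + ⟪b n, ξ⟫ • b n := by abel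
        rw [hsub, Submodule.mem_orthogonal]
        intro w hw
        rw [Submodule.mem_inf] at hw
        obtain ⟨hw1, hw2⟩ := hw
        have hwbn : ⟪w, b n⟫ = 0 := by
          have := Submodule.mem_orthogonal_singleton_iff_inner_right.mp hw1
          rw [← inner_conj_symm, this, map_zero]
        have hwvn : ⟪w, v n⟫ = 0 := by
          have := Submodule.mem_orthogonal_singleton_iff_inner_right.mp hw2
          rw [← inner_conj_symm, this, map_zero]
        have hwb1 : ⟪w, b 1⟫ = 0 := by
          rw [hv] at hwvn
          rw [inner_add_right, inner_smul_right, hwbn, add_zero] at hwvn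
          have hnz : (1 / (n : ℂ)) ≠ 0 := by
            apply one_div_ne_zero
            exact_mod_cast (by omega : n ≠ 0)
          exact (mul_eq_zero.mp hwvn).resolve_left hnz
        rw [inner_add_right, inner_smul_right, inner_smul_right, hwb1, hwbn]
        ring
    rw [hRval, hE1val]
    have hsub2 : ξ - ⟪b 1, ξ⟫ • b 1 - ⟪b n, ξ⟫ • b n - (ξ - ⟪b 1, ξ⟫ • b 1)
        = -(⟪b n, ξ⟫ • b n) := by abel
    rw [hsub2, norm_neg, norm_smul]
    simp [hnorm1]
  -- ============ E1 ≠ 1 ============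
  refine ⟨hPconv, hQconv, hRconv, ?_⟩
  intro h
  have hb1 : b 1 ∈ LinearMap.range (E1 : H →ₗ[ℂ] H) := by
    rw [h]
    exact ⟨b 1, rfl⟩
  rw [hE1.2.2, Submodule.mem_orthogonal_singleton_iff_inner_right] at hb1
  rw [hbb 1] at hb1
  exact one_ne_zero hb1
end

section
/- Let K be a compact Hausdorff space, ρ: [0,1] → K a continuous surjection, and μ a Borel probability measure on K. Define g: K → [0,1] by g(x) = min(ρ⁻¹({x})). Then g is lower semicontinuous (hence Borel measurable), ρ ∘ g = id_K, and the push-forward measure g_*μ is the unique Borel probability measure σ on [0,1] satisfying σ([0,t]) = μ(ρ([0,t])) for all t ∈ [0,1]. -/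
/-!
The sublevel sets of the least section `g` are the images of the sublevel sets of `ρ`'s
domain: `g ⁻¹' Iic t = ρ '' Iic t`. The right-hand side is compact, hence closed, which gives
lower semicontinuity; and it identifies the distribution function of `g_*μ` with
`t ↦ μ (ρ '' Iic t)`, which determines a finite measure on `[0,1]`.
-/

open MeasureTheory Set

section LeastSection

variable {α K : Type*} {ρ : α → K} {g : K → α}

theorem preimage_Iic_eq_image_Iic_of_isLeast [Preorder α]
    (hg : ∀ x, IsLeast {t | ρ t = x} (g x)) (t : α) :
    g ⁻¹' Iic t = ρ '' Iic t := by
  ext x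
  constructor
  · intro hx
    exact ⟨g x, hx, (hg x).1⟩
  · rintro ⟨s, hs, rfl⟩
    exact ((hg (ρ s)).2 rfl).trans hs

theorem lowerSemicontinuous_of_isLeast [TopologicalSpace α] [LinearOrder α]
    [ClosedIicTopology α] [CompactSpace α] [TopologicalSpace K] [T2Space K]
    (hρ : Continuous ρ) (hg : ∀ x, IsLeast {t | ρ t = x} (g x)) :
    LowerSemicontinuous g := by
  rw [lowerSemicontinuous_iff_isOpen_preimage]
  intro t
  have hIoi : g ⁻¹' Ioi t = (ρ '' Iic t)ᶜ := by
    rw [← preimage_Iic_eq_image_Iic_of_isLeast hg t, ← preimage_compl, compl_Iic]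
  rw [hIoi]
  exact ((isClosed_Iic.isCompact.image hρ).isClosed).isOpen_compl

end LeastSection

theorem stmt_13_general {K : Type*} [TopologicalSpace K] [T2Space K]
    [MeasurableSpace K] [BorelSpace K]
    (μ : Measure K)
    (ρ : Set.Icc (0:ℝ) 1 → K) (hρc : Continuous ρ)
    (g : K → Set.Icc (0:ℝ) 1) (hg : ∀ x : K, IsLeast {t | ρ t = x} (g x)) :
    LowerSemicontinuous g ∧ Measurable g ∧ ρ ∘ g = id ∧
    (∀ t : Set.Icc (0:ℝ) 1, (Measure.map g μ) (Set.Iic t) = μ (ρ '' Set.Iic t)) ∧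
    (∀ σ : Measure (Set.Icc (0:ℝ) 1), IsProbabilityMeasure σ →
      (∀ t : Set.Icc (0:ℝ) 1, σ (Set.Iic t) = μ (ρ '' Set.Iic t)) →
      σ = Measure.map g μ) := by
  have hlsc : LowerSemicontinuous g := lowerSemicontinuous_of_isLeast hρc hg
  have hmeas : Measurable g := hlsc.measurable
  have hmap : ∀ t, Measure.map g μ (Iic t) = μ (ρ '' Iic t) := fun t => by
    rw [Measure.map_apply hmeas measurableSet_Iic, preimage_Iic_eq_image_Iic_of_isLeast hg t]
  refine ⟨hlsc, hmeas, funext fun x => (hg x).1, hmap, fun σ _ hσ => ?_⟩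
  exact Measure.ext_of_Iic σ _ fun t => (hσ t).trans (hmap t).symm

/-- Let `ρ : [0,1] → K` be a continuous surjection onto a compact Hausdorff
space and `μ` a Borel probability measure on `K`.  The function `g(x) = min ρ⁻¹({x})` is
lower semicontinuous (hence Borel measurable), satisfies `ρ ∘ g = id`, and the push-forward
`g_*μ` is the unique Borel probability measure `σ` on `[0,1]` with
`σ([0,t]) = μ(ρ([0,t]))` for all `t`. -/
theorem stmt_13 {K : Type*} [TopologicalSpace K] [CompactSpace K] [T2Space K]
    [MeasurableSpace K] [BorelSpace K]
    (μ : Measure K) [IsProbabilityMeasure μ]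
    (ρ : Set.Icc (0:ℝ) 1 → K) (hρc : Continuous ρ) (hρs : Function.Surjective ρ)
    (g : K → Set.Icc (0:ℝ) 1) (hg : ∀ x : K, IsLeast {t | ρ t = x} (g x)) :
    LowerSemicontinuous g ∧ Measurable g ∧ ρ ∘ g = id ∧
    (∀ t : Set.Icc (0:ℝ) 1, (Measure.map g μ) (Set.Iic t) = μ (ρ '' Set.Iic t)) ∧
    (∀ σ : Measure (Set.Icc (0:ℝ) 1), IsProbabilityMeasure σ →
      (∀ t : Set.Icc (0:ℝ) 1, σ (Set.Iic t) = μ (ρ '' Set.Iic t)) →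
      σ = Measure.map g μ) :=
  stmt_13_general μ ρ hρc g hg
end

section
/- Let K be a compact Hausdorff space, ρ: [0,1] → K a continuous surjection, μ a Borel probability measure on K, and σ the Borel probability measure on [0,1] with σ([0,t]) = μ(ρ([0,t])). Then the push-forward ρ_*σ equals μ. -/
/-!
Every fibre `ρ⁻¹{x}` is a nonempty compact subset of the ordered space, so it has a least
element `g x`. Then `g x ≤ t ↔ x ∈ ρ '' Iic t`, i.e. `g⁻¹(Iic t) = ρ(Iic t)`; these sets are
compact, hence `g` is measurable and `g_* μ` agrees with `σ` on all initial segments, so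
`g_* μ = σ`. Since `ρ ∘ g = id`, pushing forward by `ρ` gives `ρ_* σ = μ`.
-/

open MeasureTheory Set Function

section MinSection

variable {X K : Type*} [LinearOrder X] [TopologicalSpace X] [ClosedIicTopology X]
  [CompactSpace X] [TopologicalSpace K] [T1Space K] {ρ : X → K}

noncomputable def minSection (hρc : Continuous ρ) (hρs : Surjective ρ) (x : K) : X :=
  ((isClosed_singleton.preimage hρc).isCompact.exists_isLeast (hρs x)).choose

variable (hρc : Continuous ρ) (hρs : Surjective ρ)

theorem isLeast_minSection (x : K) : IsLeast (ρ ⁻¹' {x}) (minSection hρc hρs x) :=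
  ((isClosed_singleton.preimage hρc).isCompact.exists_isLeast (hρs x)).choose_spec

theorem comp_minSection : ρ ∘ minSection hρc hρs = id :=
  funext fun x => (isLeast_minSection hρc hρs x).1

theorem preimage_minSection_Iic (t : X) : minSection hρc hρs ⁻¹' Iic t = ρ '' Iic t := by
  ext x
  constructor
  · intro hx
    exact ⟨_, hx, (isLeast_minSection hρc hρs x).1⟩
  · rintro ⟨s, hs, rfl⟩
    exact ((isLeast_minSection hρc hρs (ρ s)).2 rfl).trans hs

variable [MeasurableSpace X] [BorelSpace X] [OrderTopology X] [SecondCountableTopology X]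
  [T2Space K] [MeasurableSpace K] [OpensMeasurableSpace K]

theorem measurable_minSection : Measurable (minSection hρc hρs) :=
  measurable_of_Iic fun t => by
    rw [preimage_minSection_Iic]
    exact (isClosed_Iic.isCompact.image hρc).isClosed.measurableSet

theorem map_minSection_eq {μ : Measure K} {σ : Measure X} [IsFiniteMeasure σ]
    (hσ : ∀ t, σ (Iic t) = μ (ρ '' Iic t)) : μ.map (minSection hρc hρs) = σ :=
  (Measure.ext_of_Iic σ _ fun t => by
    rw [Measure.map_apply (measurable_minSection hρc hρs) measurableSet_Iic,
      preimage_minSection_Iic, hσ]).symm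

end MinSection

theorem stmt_14_general {K : Type*} [TopologicalSpace K] [T2Space K]
    [MeasurableSpace K] [BorelSpace K]
    (μ : Measure K)
    (ρ : Set.Icc (0:ℝ) 1 → K) (hρc : Continuous ρ) (hρs : Function.Surjective ρ)
    (σ : Measure (Set.Icc (0:ℝ) 1)) [IsProbabilityMeasure σ]
    (hσ : ∀ t : Set.Icc (0:ℝ) 1, σ (Set.Iic t) = μ (ρ '' Set.Iic t)) :
    Measure.map ρ σ = μ := by
  rw [← map_minSection_eq hρc hρs hσ,
    Measure.map_map hρc.measurable (measurable_minSection hρc hρs),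
    comp_minSection, Measure.map_id]

/-- Let `ρ : [0,1] → K` be a continuous surjection onto a compact Hausdorff
space, `μ` a Borel probability measure on `K`, and `σ` the Borel probability measure on
`[0,1]` with `σ([0,t]) = μ(ρ([0,t]))` for all `t`.  Then `ρ_*σ = μ`. -/
theorem stmt_14 {K : Type*} [TopologicalSpace K] [CompactSpace K] [T2Space K]
    [MeasurableSpace K] [BorelSpace K]
    (μ : Measure K) [IsProbabilityMeasure μ]
    (ρ : Set.Icc (0:ℝ) 1 → K) (hρc : Continuous ρ) (hρs : Function.Surjective ρ)
    (σ : Measure (Set.Icc (0:ℝ) 1)) [IsProbabilityMeasure σ]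
    (hσ : ∀ t : Set.Icc (0:ℝ) 1, σ (Set.Iic t) = μ (ρ '' Set.Iic t)) :
    Measure.map ρ σ = μ :=
  stmt_14_general μ ρ hρc hρs σ hσ
end
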